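/- arXiv:1906.00510 — 6 statements merged into one kernel-verified Lean document; each statement's English description precedes it below -/
import Mathlib

section
/- Let P ∈ F_q[t] be an irreducible polynomial of degree d ≥ 1. Then for any nonzero polynomial f ∈ F_q[t], the P-adic valuation of the factorial of f satisfies v_P(f!) = Σ_{j≥1} ⌊δ(f)/q^{dj}⌋. -/
open Polynomial

variable {F : Type*} [Field F] [Fintype F] [DecidableEq F]

/-- `delta a f` is the natural number attached to the polynomial `f` via the
enumeration `a : Fin q ≃ F` of the field (`q = Fintype.card F`): if
`f = a_{i_0} + a_{i_1} t + ⋯ + a_{i_n} t^n` then `delta a f = i_0 + i_1 q + ⋯ + i_n q^n`.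
In particular `delta a 0 = 0` whenever `a 0 = 0`. -/
noncomputable def delta (a : Fin (Fintype.card F) ≃ F) (f : F[X]) : ℕ :=
  ∑ j ∈ Finset.range (f.natDegree + 1), (a.symm (f.coeff j) : ℕ) * Fintype.card F ^ j

/-- The inverse of `delta`: the polynomial whose `j`-th coefficient is the `j`-th
base-`q` digit of `m` (under the enumeration `a`). -/
noncomputable def deltaInv (a : Fin (Fintype.card F) ≃ F) (m : ℕ) : F[X] :=
  ∑ j ∈ Finset.range (m + 1),
    C (a ⟨m / Fintype.card F ^ j % Fintype.card F, Nat.mod_lt _ Fintype.card_pos⟩) * X ^ j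

/-- The factorial of a polynomial: `f! = ∏_{g < f} (f - g)`, the product over all
polynomials `g` with `delta a g < delta a f`; in particular `0! = 1`. -/
noncomputable def pfact (a : Fin (Fintype.card F) ≃ F) (f : F[X]) : F[X] :=
  ∏ m ∈ Finset.range (delta a f), (f - deltaInv a m)

/-- The Smarandache function: `S a 0 = 0`, and for `f ≠ 0`, `S a f` is the smallest
polynomial `g` (in the order given by `delta`) such that `f ∣ g!`. -/
noncomputable def S (a : Fin (Fintype.card F) ≃ F) (f : F[X]) : F[X] :=
  if f = 0 then 0 else deltaInv a (sInf {m : ℕ | f ∣ pfact a (deltaInv a m)})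

set_option linter.unusedSectionVars false

namespace PfactAux

theorem sum_pow_lt {q : ℕ} (hq : 0 < q) (c : ℕ → ℕ) (hc : ∀ j, c j < q) (n : ℕ) :
    ∑ j ∈ Finset.range n, c j * q ^ j < q ^ n := by
  induction n with
  | zero => simp
  | succ n ih =>
    rw [Finset.sum_range_succ, pow_succ]
    have h1 : c n * q ^ n ≤ (q - 1) * q ^ n :=
      Nat.mul_le_mul_right _ (by have := hc n; omega)
    have h2 : q ^ n + (q - 1) * q ^ n = q ^ n * q := by
      have : 1 + (q - 1) = q := by omega
      calc q ^ n + (q - 1) * q ^ n = (1 + (q - 1)) * q ^ n := by ring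
        _ = q ^ n * q := by rw [this]; ring
    omega

theorem digit_extract {q : ℕ} (hq : 1 < q) (c : ℕ → ℕ) (hc : ∀ j, c j < q) (n i : ℕ) :
    (∑ j ∈ Finset.range n, c j * q ^ j) / q ^ i % q = if i < n then c i else 0 := by
  have hq0 : 0 < q := by omega
  by_cases hin : i < n
  · simp only [hin, if_true]
    have hsplit : ∑ j ∈ Finset.range n, c j * q ^ j =
        ∑ j ∈ Finset.range i, c j * q ^ j + ∑ j ∈ Finset.Ico i n, c j * q ^ j := by
      rw [Finset.sum_range_add_sum_Ico _ (le_of_lt hin)]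
    have hIco : ∑ j ∈ Finset.Ico i n, c j * q ^ j
        = q ^ i * ∑ k ∈ Finset.range (n - i), c (i + k) * q ^ k := by
      rw [Finset.sum_Ico_eq_sum_range, Finset.mul_sum]
      apply Finset.sum_congr rfl
      intro k _
      rw [pow_add]; ring
    set H := ∑ k ∈ Finset.range (n - i), c (i + k) * q ^ k with hH
    have hL : ∑ j ∈ Finset.range i, c j * q ^ j < q ^ i := sum_pow_lt hq0 c hc i
    have hdiv : (∑ j ∈ Finset.range n, c j * q ^ j) / q ^ i = H := by
      rw [hsplit, hIco, Nat.add_mul_div_left _ _ (Nat.pow_pos (n := i) hq0),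
        Nat.div_eq_of_lt hL, zero_add]
    rw [hdiv]
    -- H % q = c i
    obtain ⟨s, hs⟩ : ∃ s, n - i = s + 1 := ⟨n - i - 1, by omega⟩
    rw [hH, hs, Finset.sum_range_succ']
    simp only [add_zero, pow_zero, mul_one]
    have : ∑ k ∈ Finset.range s, c (i + (k + 1)) * q ^ (k + 1)
        = (∑ k ∈ Finset.range s, c (i + (k + 1)) * q ^ k) * q := by
      rw [Finset.sum_mul]
      apply Finset.sum_congr rfl
      intro k _; rw [pow_succ]; ring
    rw [this, Nat.mul_add_mod', Nat.mod_eq_of_lt (hc i)]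
  · simp only [hin, if_false]
    have h1 : (∑ j ∈ Finset.range n, c j * q ^ j) < q ^ i :=
      lt_of_lt_of_le (sum_pow_lt hq0 c hc n) (Nat.pow_le_pow_right hq0 (by omega))
    rw [Nat.div_eq_of_lt h1, Nat.zero_mod]

theorem sum_digits_mod {q : ℕ} (hq : 1 < q) (m : ℕ) : ∀ n : ℕ,
    ∑ j ∈ Finset.range n, (m / q ^ j % q) * q ^ j = m % q ^ n := by
  have hq0 : 0 < q := by omega
  intro n
  induction n with
  | zero => simp [Nat.mod_one]
  | succ n ih =>
    rw [Finset.sum_range_succ, ih]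
    -- show m % q ^ n + m / q ^ n % q * q ^ n = m % q ^ (n + 1)
    have h1 : m / q ^ n = q * (m / q ^ (n + 1)) + m / q ^ n % q := by
      conv_lhs => rw [← Nat.div_add_mod (m / q ^ n) q]
      rw [Nat.div_div_eq_div_mul, ← pow_succ]
    have h2 : m = q ^ n * (m / q ^ n) + m % q ^ n := (Nat.div_add_mod _ _).symm
    have h3 : m = q ^ (n + 1) * (m / q ^ (n + 1)) + (m % q ^ n + m / q ^ n % q * q ^ n) := by
      conv_lhs => rw [h2, h1]
      rw [pow_succ]; ring
    have h4 : m % q ^ n + m / q ^ n % q * q ^ n < q ^ (n + 1) := by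
      have ha : m % q ^ n < q ^ n := Nat.mod_lt _ (Nat.pow_pos (n := n) hq0)
      have hb : m / q ^ n % q ≤ q - 1 := by have := Nat.mod_lt (m / q ^ n) hq0; omega
      have hc : m / q ^ n % q * q ^ n ≤ (q - 1) * q ^ n := Nat.mul_le_mul_right _ hb
      have hd : q ^ n + (q - 1) * q ^ n = q ^ (n + 1) := by
        have h1q : 1 + (q - 1) = q := by omega
        calc q ^ n + (q - 1) * q ^ n = (1 + (q - 1)) * q ^ n := by ring
          _ = q ^ (n + 1) := by rw [h1q, pow_succ]; ring
      omega
    conv_rhs => rw [h3]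
    rw [Nat.mul_add_mod, Nat.mod_eq_of_lt h4]

theorem sum_digits {q : ℕ} (hq : 1 < q) (m n : ℕ) (h : m < q ^ n) :
    ∑ j ∈ Finset.range n, (m / q ^ j % q) * q ^ j = m := by
  rw [sum_digits_mod hq, Nat.mod_eq_of_lt h]

section Poly

variable (a : Fin (Fintype.card F) ≃ F) (h0 : a 0 = 0)

local notation "q" => Fintype.card F

theorem hq1 : 1 < Fintype.card F := Fintype.one_lt_card

theorem hq0 : 0 < Fintype.card F := Fintype.card_pos

include h0

theorem a_zero' (h : 0 < Fintype.card F) : a ⟨0, h⟩ = 0 := by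
  have : (⟨0, h⟩ : Fin q) = 0 := rfl
  rw [this, h0]

theorem asymm_zero : ((a.symm (0 : F)) : ℕ) = 0 := by
  rw [← h0, Equiv.symm_apply_apply]
  rfl

theorem coeff_deltaInv (m i : ℕ) :
    (deltaInv a m).coeff i = a ⟨m / q ^ i % q, Nat.mod_lt _ Fintype.card_pos⟩ := by
  rw [deltaInv, finset_sum_coeff]
  simp only [coeff_C_mul, coeff_X_pow, mul_ite, mul_one, mul_zero]
  by_cases h : i < m + 1
  · rw [Finset.sum_eq_single i (fun b _ hb => by simp [Ne.symm hb]) (fun hi => absurd (Finset.mem_range.2 h) hi)]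
    simp
  · rw [Finset.sum_eq_zero (fun b hb => by
      rw [if_neg]; intro hbi; rw [Finset.mem_range] at hb; omega)]
    have hmi : m < q ^ i := by
      have h1 : m < i := by omega
      have h2 : i < q ^ i := Nat.lt_pow_self (n := i) hq1
      omega
    rw [Nat.div_eq_of_lt hmi]
    have : (0 : ℕ) % q = 0 := Nat.zero_mod _
    simp only [this]
    rw [a_zero' a h0]

theorem delta_eq_sum (f : F[X]) (n : ℕ) (hn : f.natDegree < n) :
    delta a f = ∑ j ∈ Finset.range n, ((a.symm (f.coeff j)) : ℕ) * q ^ j := by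
  rw [delta]
  apply Finset.sum_subset
  · intro x hx
    rw [Finset.mem_range] at *
    omega
  · intro x _ hx
    rw [Finset.mem_range, not_lt] at hx
    rw [coeff_eq_zero_of_natDegree_lt (by omega), asymm_zero a h0, zero_mul]

theorem delta_lt_pow (f : F[X]) (n : ℕ) (hn : f.natDegree < n) :
    delta a f < q ^ n := by
  rw [delta_eq_sum a h0 f n hn]
  exact sum_pow_lt hq0 _ (fun j => (a.symm (f.coeff j)).isLt) n

theorem delta_deltaInv (m : ℕ) : delta a (deltaInv a m) = m := by
  have hq1 : 1 < Fintype.card F := Fintype.one_lt_card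
  have hq0 : 0 < Fintype.card F := Fintype.card_pos
  set n := max ((deltaInv a m).natDegree + 1) (m + 1) with hn
  rw [delta_eq_sum a h0 _ n (by omega)]
  have : ∀ j, ((a.symm ((deltaInv a m).coeff j)) : ℕ) = m / q ^ j % q := by
    intro j
    rw [coeff_deltaInv a h0, Equiv.symm_apply_apply]
  simp only [this]
  apply sum_digits hq1
  calc m < q ^ (m + 1) := by
        have := Nat.lt_pow_self (n := m + 1) hq1; omega
    _ ≤ q ^ n := Nat.pow_le_pow_right hq0 (by omega)

theorem deltaInv_delta (f : F[X]) : deltaInv a (delta a f) = f := by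
  have hq1 : 1 < Fintype.card F := Fintype.one_lt_card
  ext i
  rw [coeff_deltaInv a h0]
  have hdig := digit_extract hq1 (fun j => ((a.symm (f.coeff j)) : ℕ))
    (fun j => (a.symm (f.coeff j)).isLt) (f.natDegree + 1) i
  have key : delta a f / q ^ i % q
      = if i < f.natDegree + 1 then ((a.symm (f.coeff i)) : ℕ) else 0 := by
    rw [delta]; exact hdig
  by_cases h : i < f.natDegree + 1
  · have : (⟨delta a f / q ^ i % q, Nat.mod_lt _ Fintype.card_pos⟩ : Fin q)
        = a.symm (f.coeff i) := Fin.ext (key.trans (if_pos h))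
    rw [this, Equiv.apply_symm_apply]
  · have : (⟨delta a f / q ^ i % q, Nat.mod_lt _ Fintype.card_pos⟩ : Fin q)
        = ⟨0, Fintype.card_pos⟩ := Fin.ext (key.trans (if_neg h))
    rw [this, a_zero' a h0, coeff_eq_zero_of_natDegree_lt (by omega)]

theorem delta_zero : delta a 0 = 0 := by
  simp [delta, asymm_zero a h0]

theorem deltaInv_split (k e r : ℕ) (hr : r < q ^ e) :
    deltaInv a (k * q ^ e + r) = deltaInv a (k * q ^ e) + deltaInv a r := by
  have hq0' : 0 < Fintype.card F := Fintype.card_pos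
  ext i
  rw [coeff_add, coeff_deltaInv a h0, coeff_deltaInv a h0, coeff_deltaInv a h0]
  by_cases hie : i < e
  · have hqi : (0:ℕ) < q ^ i := Nat.pow_pos hq0'
    have hsplit : (q : ℕ) ^ e = q ^ (e - i) * q ^ i := by
      rw [← pow_add]; congr 1; omega
    have hd1 : k * q ^ e / q ^ i = k * q ^ (e - i) := by
      rw [hsplit, ← mul_assoc, Nat.mul_div_cancel _ hqi]
    have hd2 : (k * q ^ e + r) / q ^ i = k * q ^ (e - i) + r / q ^ i := by
      rw [hsplit, ← mul_assoc, add_comm, Nat.add_mul_div_right _ _ hqi, add_comm]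
    have hexp : (q : ℕ) ^ (e - i) = q * q ^ (e - i - 1) := by
      rw [← pow_succ']; congr 1; omega
    have hm1 : k * q ^ e / q ^ i % q = 0 := by
      rw [hd1, hexp]
      have h' : k * ((q:ℕ) * q ^ (e - i - 1)) = k * q ^ (e - i - 1) * q := by ring
      rw [h', Nat.mul_mod_left]
    have hm2 : (k * q ^ e + r) / q ^ i % q = r / q ^ i % q := by
      rw [hd2, hexp]
      have h' : k * ((q:ℕ) * q ^ (e - i - 1)) + r / q ^ i
          = r / q ^ i + k * q ^ (e - i - 1) * q := by ring
      rw [h', Nat.add_mul_mod_self_right]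
    have e1 : (⟨(k * q ^ e + r) / q ^ i % q, Nat.mod_lt _ Fintype.card_pos⟩ : Fin q)
        = ⟨r / q ^ i % q, Nat.mod_lt _ Fintype.card_pos⟩ := Fin.ext hm2
    have e2 : (⟨k * q ^ e / q ^ i % q, Nat.mod_lt _ Fintype.card_pos⟩ : Fin q)
        = ⟨0, hq0'⟩ := Fin.ext hm1
    rw [e1, e2, a_zero' a h0, zero_add]
  · have hle : e ≤ i := by omega
    have hqe : (0:ℕ) < q ^ e := Nat.pow_pos hq0'
    have hsplit : (q : ℕ) ^ i = q ^ e * q ^ (i - e) := by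
      rw [← pow_add]; congr 1; omega
    have hd3 : (k * q ^ e + r) / q ^ i = k / q ^ (i - e) := by
      rw [hsplit, ← Nat.div_div_eq_div_mul, add_comm, Nat.add_mul_div_right _ _ hqe,
        Nat.div_eq_of_lt hr, zero_add]
    have hd4 : k * q ^ e / q ^ i = k / q ^ (i - e) := by
      rw [hsplit, ← Nat.div_div_eq_div_mul, Nat.mul_div_cancel _ hqe]
    have hd5 : r / q ^ i = 0 :=
      Nat.div_eq_of_lt (lt_of_lt_of_le hr (Nat.pow_le_pow_right hq0' hle))
    have e1 : (⟨(k * q ^ e + r) / q ^ i % q, Nat.mod_lt _ Fintype.card_pos⟩ : Fin q)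
        = ⟨k * q ^ e / q ^ i % q, Nat.mod_lt _ Fintype.card_pos⟩ := Fin.ext (by rw [hd3, hd4])
    have e2 : (⟨r / q ^ i % q, Nat.mod_lt _ Fintype.card_pos⟩ : Fin q)
        = ⟨0, hq0'⟩ := Fin.ext (by rw [hd5]; exact Nat.zero_mod _)
    rw [e1, e2, a_zero' a h0, add_zero]

theorem degree_deltaInv_lt (e r : ℕ) (hr : r < q ^ e) :
    (deltaInv a r).degree < (e : ℕ) := by
  rw [degree_lt_iff_coeff_zero]
  intro i hi
  have hie : e ≤ i := by exact_mod_cast hi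
  have hq0' : 0 < Fintype.card F := Fintype.card_pos
  rw [coeff_deltaInv a h0]
  have hd : r / q ^ i = 0 :=
    Nat.div_eq_of_lt (lt_of_lt_of_le hr (Nat.pow_le_pow_right hq0' hie))
  have : (⟨r / q ^ i % q, Nat.mod_lt _ Fintype.card_pos⟩ : Fin q) = ⟨0, hq0'⟩ :=
    Fin.ext (by rw [hd]; exact Nat.zero_mod _)
  rw [this, a_zero' a h0]

theorem delta_lt_of_degree_lt (g : F[X]) (e : ℕ) (he : 1 ≤ e) (hg : g.degree < (e : ℕ)) :
    delta a g < q ^ e := by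
  have hq1 : 1 < Fintype.card F := Fintype.one_lt_card
  have hnd : g.natDegree < e := by
    by_cases h : g = 0
    · simp [h]; omega
    · exact (natDegree_lt_iff_degree_lt h).2 hg
  exact delta_lt_pow a h0 g e hnd

theorem natDegree_lt_delta (g : F[X]) (hg : g ≠ 0) : g.natDegree < delta a g := by
  have hq1 : 1 < Fintype.card F := Fintype.one_lt_card
  set n := g.natDegree with hn
  have hidx : 1 ≤ ((a.symm (g.coeff n)) : ℕ) := by
    rcases Nat.eq_zero_or_pos ((a.symm (g.coeff n)) : ℕ) with h | h
    · exfalso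
      have : (a.symm (g.coeff n)) = ⟨0, Fintype.card_pos⟩ := Fin.ext h
      have h2 : g.coeff n = 0 := by
        have := congrArg a this
        rw [Equiv.apply_symm_apply, a_zero' a h0] at this
        exact this
      exact (leadingCoeff_ne_zero.2 hg) h2
    · exact h
  have h1 : ((a.symm (g.coeff n)) : ℕ) * q ^ n ≤ delta a g := by
    rw [delta]
    exact Finset.single_le_sum (f := fun j => ((a.symm (g.coeff j)) : ℕ) * q ^ j)
      (fun _ _ => Nat.zero_le _) (Finset.mem_range.2 (by omega))
  have h2 : (q : ℕ) ^ n ≤ ((a.symm (g.coeff n)) : ℕ) * q ^ n :=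
    Nat.le_mul_of_pos_left _ hidx
  have h3 : n < q ^ n := Nat.lt_pow_self (n := n) hq1
  omega

theorem delta_pos (f : F[X]) (hf : f ≠ 0) : 0 < delta a f := by
  rcases Nat.eq_zero_or_pos (delta a f) with h | h
  · exfalso
    have := deltaInv_delta a h0 f
    rw [h] at this
    have h2 : deltaInv a 0 = 0 := by
      have := delta_zero a h0
      calc deltaInv a (0:ℕ) = deltaInv a (delta a 0) := by rw [this]
        _ = 0 := deltaInv_delta a h0 0
    rw [h2] at this
    exact hf this.symm
  · exact h


theorem count_dvd (P : F[X]) (hP : Irreducible P) (d : ℕ) (hd : P.natDegree = d) (hd1 : 1 ≤ d)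
    (f : F[X]) (hf : f ≠ 0) (j : ℕ) (hj : 1 ≤ j)
    [DecidablePred fun m => P ^ j ∣ f - deltaInv a m] :
    (Finset.filter (fun m => P ^ j ∣ f - deltaInv a m) (Finset.range (delta a f))).card
      = delta a f / Fintype.card F ^ (d * j) := by
  have hq1 : 1 < Fintype.card F := Fintype.one_lt_card
  have hq0 : 0 < Fintype.card F := Fintype.card_pos
  set N := delta a f with hN
  set e := d * j with he
  have he1 : 1 ≤ e := Nat.one_le_iff_ne_zero.mpr (by simp [he]; omega)
  have hqe : 0 < q ^ e := Nat.pow_pos hq0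
  have hPne : P ≠ 0 := hP.ne_zero
  set P' := P * C (P.leadingCoeff)⁻¹ with hP'
  have hP'm : P'.Monic := monic_mul_leadingCoeff_inv hPne
  set M := P' ^ j with hM
  have hMm : M.Monic := hP'm.pow j
  have hMne : M ≠ 0 := hMm.ne_zero
  have hndM : M.natDegree = e := by
    rw [hM, natDegree_pow, natDegree_mul_leadingCoeff_inv _ hPne, hd, he, Nat.mul_comm]
  have hdegM : M.degree = (e : ℕ) := by
    rw [degree_eq_natDegree hMne, hndM]
  have hdvd_iff : ∀ x : F[X], P ^ j ∣ x ↔ M ∣ x := by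
    intro x
    have hu : IsUnit (C (P.leadingCoeff)⁻¹) :=
      isUnit_C.mpr (isUnit_iff_ne_zero.mpr (inv_ne_zero (leadingCoeff_ne_zero.mpr hPne)))
    have hassoc : Associated P P' := ⟨hu.unit, by rw [IsUnit.unit_spec]⟩
    exact (hassoc.pow_pow (n := j)).dvd_iff_dvd_left
  have huniq : ∀ s h : F[X], s.degree < (e : ℕ) → h.degree < (e : ℕ) → M ∣ s - h → s = h := by
    intro s h hs hh hdvd
    by_contra hne
    have hsub : s - h ≠ 0 := sub_ne_zero.mpr hne
    have h1 : M.degree ≤ (s - h).degree := degree_le_of_dvd hdvd hsub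
    have h2 : (s - h).degree < (e : ℕ) :=
      lt_of_le_of_lt (degree_sub_le s h) (max_lt hs hh)
    rw [hdegM] at h1
    exact absurd (lt_of_le_of_lt h1 h2) (lt_irrefl _)
  set rho : ℕ → ℕ := fun k => delta a ((f - deltaInv a (k * q ^ e)) %ₘ M) with hrho
  have hrho_lt : ∀ k, rho k < q ^ e := by
    intro k
    apply delta_lt_of_degree_lt a h0 _ e he1
    rw [← hdegM]
    exact degree_modByMonic_lt _ hMm
  have hkey : ∀ k r, r < q ^ e →
      (P ^ j ∣ f - deltaInv a (k * q ^ e + r) ↔ r = rho k) := by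
    intro k r hr
    set g := deltaInv a (k * q ^ e) with hg
    set s := deltaInv a r with hs
    set h := (f - g) %ₘ M with hh
    have hsplit : f - deltaInv a (k * q ^ e + r) = (f - g) - s := by
      rw [deltaInv_split a h0 k e r hr]; ring
    have hdegs : s.degree < (e : ℕ) := degree_deltaInv_lt a h0 e r hr
    have hdegh : h.degree < (e : ℕ) := by
      rw [← hdegM]; exact degree_modByMonic_lt _ hMm
    have hMfgh : M ∣ (f - g) - h := by
      have := modByMonic_add_div (f - g) M
      exact ⟨(f - g) /ₘ M, sub_eq_of_eq_add' this.symm⟩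
    rw [hsplit, hdvd_iff]
    constructor
    · intro hdvd
      have hsh : M ∣ s - h := by
        have : s - h = ((f - g) - h) - ((f - g) - s) := by ring
        rw [this]
        exact dvd_sub hMfgh hdvd
      have : s = h := huniq s h hdegs hdegh hsh
      rw [hrho]
      calc r = delta a s := (delta_deltaInv a h0 r).symm
        _ = delta a h := by rw [this]
    · intro hreq
      have hsheq : s = h := by
        rw [hs, hreq, hrho]
        exact deltaInv_delta a h0 h
      rw [hsheq]
      exact hMfgh
  have hrho_last : rho (N / q ^ e) = N % q ^ e := by
    have hmod : N % q ^ e < q ^ e := Nat.mod_lt _ hqe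
    have hfsplit : f = deltaInv a (N / q ^ e * q ^ e) + deltaInv a (N % q ^ e) := by
      have h1 : N / q ^ e * q ^ e + N % q ^ e = N := Nat.div_add_mod' N (q ^ e)
      have h2 := deltaInv_split a h0 (N / q ^ e) e (N % q ^ e) hmod
      rw [h1] at h2
      rw [← h2, hN, deltaInv_delta a h0]
    have hsub : f - deltaInv a (N / q ^ e * q ^ e) = deltaInv a (N % q ^ e) := by
      rw [hfsplit]; ring
    rw [hrho]
    simp only [hsub]
    rw [(modByMonic_eq_self_iff hMm).mpr
      (by rw [hdegM]; exact degree_deltaInv_lt a h0 e _ hmod)]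
    exact delta_deltaInv a h0 _
  -- the filter equals the image
  have himage : Finset.filter (fun m => P ^ j ∣ f - deltaInv a m) (Finset.range N)
      = Finset.image (fun k => k * q ^ e + rho k) (Finset.range (N / q ^ e)) := by
    ext m
    rw [Finset.mem_filter, Finset.mem_image, Finset.mem_range]
    constructor
    · rintro ⟨hmN, hdvd⟩
      refine ⟨m / q ^ e, Finset.mem_range.mpr ?_, ?_⟩
      · have hle : m / q ^ e ≤ N / q ^ e := Nat.div_le_div_right (le_of_lt hmN)
        rcases lt_or_eq_of_le hle with h | h
        · exact h
        · exfalso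
          have hr : m % q ^ e < q ^ e := Nat.mod_lt _ hqe
          have := (hkey (m / q ^ e) (m % q ^ e) hr).mp
            (by rw [Nat.div_add_mod']; exact hdvd)
          have hmeq : m = N := by
            have h2 := Nat.div_add_mod m (q ^ e)
            have h3 := Nat.div_add_mod N (q ^ e)
            rw [h] at this h2
            rw [this, hrho_last] at h2
            omega
          omega
      · have hr : m % q ^ e < q ^ e := Nat.mod_lt _ hqe
        have := (hkey (m / q ^ e) (m % q ^ e) hr).mp
          (by rw [Nat.div_add_mod']; exact hdvd)
        rw [← this, Nat.div_add_mod']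
    · rintro ⟨k, hk, hkm⟩
      have hk' : k < N / q ^ e := Finset.mem_range.mp hk
      constructor
      · rw [← hkm]
        have h1 : k + 1 ≤ N / q ^ e := hk'
        have h2 : (k + 1) * q ^ e ≤ N / q ^ e * q ^ e := Nat.mul_le_mul_right _ h1
        have h3 : N / q ^ e * q ^ e ≤ N := Nat.div_mul_le_self _ _
        have h4 := hrho_lt k
        have : k * q ^ e + rho k < (k + 1) * q ^ e := by
          rw [add_one_mul]; omega
        omega
      · rw [← hkm]
        exact (hkey k (rho k) (hrho_lt k)).mpr rfl
  rw [himage, Finset.card_image_of_injOn, Finset.card_range]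
  intro x _ y _ hxy
  have hxy' : x * q ^ e + rho x = y * q ^ e + rho y := hxy
  have hx := hrho_lt x
  have hy := hrho_lt y
  have : (x * q ^ e + rho x) / q ^ e = (y * q ^ e + rho y) / q ^ e := by rw [hxy']
  rwa [add_comm, Nat.add_mul_div_right _ _ hqe, Nat.div_eq_of_lt hx, zero_add,
    add_comm, Nat.add_mul_div_right _ _ hqe, Nat.div_eq_of_lt hy, zero_add] at this

end Poly
end PfactAux

open PfactAux in
private theorem valuation_pfact' (a : Fin (Fintype.card F) ≃ F) (h0 : a 0 = 0) (h1 : a 1 = 1)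
    (P : F[X]) (hP : Irreducible P) (d : ℕ) (hd : P.natDegree = d) (hd1 : 1 ≤ d)
    (f : F[X]) (hf : f ≠ 0) :
    P ^ (∑ j ∈ Finset.Icc 1 (delta a f), delta a f / Fintype.card F ^ (d * j)) ∣
        (∏ m ∈ Finset.range (delta a f), (f - deltaInv a m)) ∧
    ¬ P ^ ((∑ j ∈ Finset.Icc 1 (delta a f), delta a f / Fintype.card F ^ (d * j)) + 1) ∣
        (∏ m ∈ Finset.range (delta a f), (f - deltaInv a m)) := by
  classical
  have hq1 : 1 < Fintype.card F := Fintype.one_lt_card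
  have hq0 : 0 < Fintype.card F := Fintype.card_pos
  set N := delta a f with hN
  have hN1 : 0 < N := delta_pos a h0 f hf
  set x : ℕ → F[X] := fun m => f - deltaInv a m with hx
  have hxne : ∀ m ∈ Finset.range N, x m ≠ 0 := by
    intro m hm heq
    have hfm : f = deltaInv a m := by
      have : f - deltaInv a m = 0 := heq
      rwa [sub_eq_zero] at this
    have h2 : N = m := by rw [hN, hfm, delta_deltaInv a h0]
    rw [Finset.mem_range] at hm; omega
  have hfin : ∀ m ∈ Finset.range N, FiniteMultiplicity P (x m) := fun m hm =>
    FiniteMultiplicity.of_not_isUnit hP.not_isUnit (hxne m hm)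
  set V : ℕ → ℕ := fun m => multiplicity P (x m) with hV
  set T := ∑ m ∈ Finset.range N, V m with hT
  have hdvd : P ^ T ∣ ∏ m ∈ Finset.range N, x m := by
    rw [hT, ← Finset.prod_pow_eq_pow_sum]
    exact Finset.prod_dvd_prod_of_dvd _ _ (fun m hm => pow_multiplicity_dvd P (x m))
  have hemul : emultiplicity P (∏ m ∈ Finset.range N, x m) = (T : ℕ∞) := by
    rw [Finset.emultiplicity_prod hP.prime, hT, Nat.cast_sum]
    exact Finset.sum_congr rfl (fun m hm => (hfin m hm).emultiplicity_eq_multiplicity)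
  have hnotdvd : ¬ P ^ (T + 1) ∣ ∏ m ∈ Finset.range N, x m := by
    intro hdv
    have h1' := le_emultiplicity_of_pow_dvd hdv
    rw [hemul] at h1'
    have h2' : (T + 1 : ℕ) ≤ T := by exact_mod_cast h1'
    omega
  have hVcard : ∀ m ∈ Finset.range N, V m
      = ((Finset.Icc 1 N).filter (fun j => P ^ j ∣ x m)).card := by
    intro m hm
    have hfinm := hfin m hm
    have hVle : V m ≤ N := by
      have h1' : P ^ V m ∣ x m := pow_multiplicity_dvd P (x m)
      have h2' : (P ^ V m).natDegree ≤ (x m).natDegree :=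
        natDegree_le_of_dvd h1' (hxne m hm)
      rw [natDegree_pow, hd] at h2'
      have hdf : f.natDegree < N := natDegree_lt_delta a h0 f hf
      have hdg : (deltaInv a m).natDegree < N := by
        by_cases hz : deltaInv a m = 0
        · rw [hz]; simpa using hN1
        · have hlt := natDegree_lt_delta a h0 _ hz
          rw [delta_deltaInv a h0] at hlt
          rw [Finset.mem_range] at hm
          omega
      have h3' : (x m).natDegree < N :=
        lt_of_le_of_lt (natDegree_sub_le _ _) (max_lt hdf hdg)
      have h4' : V m ≤ V m * d := Nat.le_mul_of_pos_right _ (by omega)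
      omega
    have hfilter : (Finset.Icc 1 N).filter (fun j => P ^ j ∣ x m) = Finset.Icc 1 (V m) := by
      ext i
      rw [Finset.mem_filter, Finset.mem_Icc, Finset.mem_Icc]
      constructor
      · rintro ⟨⟨ha1, _⟩, ha3⟩
        exact ⟨ha1, hfinm.le_multiplicity_of_pow_dvd ha3⟩
      · rintro ⟨ha1, ha2⟩
        exact ⟨⟨ha1, le_trans ha2 hVle⟩, hfinm.pow_dvd_iff_le_multiplicity.mpr ha2⟩
    rw [hfilter, Nat.card_Icc]
    omega
  have hswap : T = ∑ j ∈ Finset.Icc 1 N,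
      ((Finset.range N).filter (fun m => P ^ j ∣ x m)).card := by
    rw [hT, Finset.sum_congr rfl hVcard]
    simp only [Finset.card_filter]
    exact Finset.sum_comm
  have hcount : ∀ j ∈ Finset.Icc 1 N,
      ((Finset.range N).filter (fun m => P ^ j ∣ x m)).card
        = N / Fintype.card F ^ (d * j) := by
    intro j hj
    rw [Finset.mem_Icc] at hj
    exact count_dvd a h0 P hP d hd hd1 f hf j hj.1
  have hTval : T = ∑ j ∈ Finset.Icc 1 N, N / Fintype.card F ^ (d * j) := by
    rw [hswap]; exact Finset.sum_congr rfl hcount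
  exact ⟨by rw [← hTval]; exact hdvd, by rw [← hTval]; exact hnotdvd⟩

/-- Lemma 2.2: for an irreducible `P` of degree `d ≥ 1` and any nonzero `f`,
the `P`-adic valuation of `f!` equals `∑_{j ≥ 1} ⌊delta f / q^{d j}⌋`
(the sum is finite: all terms with `j > delta f` vanish). -/
theorem valuation_pfact (a : Fin (Fintype.card F) ≃ F) (h0 : a 0 = 0) (h1 : a 1 = 1)
    (P : F[X]) (hP : Irreducible P) (d : ℕ) (hd : P.natDegree = d) (hd1 : 1 ≤ d)
    (f : F[X]) (hf : f ≠ 0) :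
    P ^ (∑ j ∈ Finset.Icc 1 (delta a f), delta a f / Fintype.card F ^ (d * j)) ∣ pfact a f ∧
    ¬ P ^ ((∑ j ∈ Finset.Icc 1 (delta a f), delta a f / Fintype.card F ^ (d * j)) + 1) ∣
        pfact a f := by
  have h := valuation_pfact' a h0 h1 P hP d hd hd1 f hf
  rw [pfact]
  exact h
end

section
/- Fix an integer n > 1 and define the sequence b_j = (n^j − 1)/(n − 1) for j ∈ ℕ*. Then every positive integer e can be uniquely represented as e = c_1 b_{j_1} + c_2 b_{j_2} + ⋯ + c_k b_{j_k}, where j_1 > j_2 > ⋯ > j_k > 0, 1 ≤ c_i < n for i = 1, 2, …, k−1, and 1 ≤ c_k ≤ n. -/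
open Finset in
private def BB (n j : ℕ) : ℕ := ∑ i ∈ Finset.range j, n ^ i

private def VV (n : ℕ) (L : List (ℕ × ℕ)) : Prop :=
  L ≠ [] ∧
  List.Chain' (fun p q : ℕ × ℕ => q.2 < p.2) L ∧
  (∀ p ∈ L, 0 < p.2) ∧
  (∀ p ∈ L.dropLast, 1 ≤ p.1 ∧ p.1 < n) ∧
  (∀ p : ℕ × ℕ, L.getLast? = some p → 1 ≤ p.1 ∧ p.1 ≤ n)

private def SS (n : ℕ) (L : List (ℕ × ℕ)) : ℕ :=
  (L.map fun p : ℕ × ℕ => p.1 * BB n p.2).sum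

private lemma BB_succ (n j : ℕ) : BB n (j + 1) = BB n j + n ^ j := by
  simp [BB, Finset.sum_range_succ]

private lemma BB_one (n : ℕ) : BB n 1 = 1 := by simp [BB]

private lemma BB_mono (n : ℕ) (hn : 1 < n) : StrictMono (BB n) := by
  apply strictMono_nat_of_lt_succ
  intro j
  rw [BB_succ]
  have : 0 < n ^ j := Nat.pow_pos (by omega)
  omega

private lemma BB_pos (n : ℕ) (hn : 1 < n) {j : ℕ} (hj : 0 < j) : 0 < BB n j := by
  have := BB_mono n hn hj
  simpa [BB] using this

private lemma BB_ge_self (n : ℕ) (hn : 1 < n) (j : ℕ) : j ≤ BB n j := by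
  induction j with
  | zero => simp [BB]
  | succ k ih =>
    rw [BB_succ]
    have : 0 < n ^ k := Nat.pow_pos (by omega)
    omega

private lemma BB_succ' (n : ℕ) (hn : 1 < n) (j : ℕ) : BB n (j + 1) = n * BB n j + 1 := by
  rw [BB, BB, Finset.sum_range_succ', Finset.mul_sum]
  simp only [pow_zero, pow_succ]
  congr 1
  exact Finset.sum_congr rfl fun i _ => by ring

/-- first coordinate of head is ≥ 1 -/
private lemma head_c_ge (n : ℕ) {c j : ℕ} {T : List (ℕ × ℕ)} (h : VV n ((c, j) :: T)) :
    1 ≤ c := by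
  obtain ⟨-, -, -, h4, h5⟩ := h
  cases T with
  | nil => exact (h5 (c, j) rfl).1
  | cons q T' =>
    have : (c, j) ∈ ((c, j) :: q :: T').dropLast := by
      rw [List.dropLast_cons_of_ne_nil (by simp)]; simp
    exact (h4 _ this).1

private lemma tail_valid (n : ℕ) {c j : ℕ} {q : ℕ × ℕ} {T : List (ℕ × ℕ)}
    (h : VV n ((c, j) :: q :: T)) : VV n (q :: T) ∧ q.2 < j ∧ c < n := by
  obtain ⟨-, h2, h3, h4, h5⟩ := h
  unfold List.Chain' at h2; rw [List.isChain_cons_cons] at h2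
  have hdl : ((c, j) :: q :: T).dropLast = (c, j) :: (q :: T).dropLast :=
    List.dropLast_cons_of_ne_nil (by simp)
  have hc : c < n := by
    have : (c, j) ∈ ((c, j) :: q :: T).dropLast := by rw [hdl]; simp
    exact (h4 _ this).2
  refine ⟨⟨by simp, h2.2, fun p hp => h3 p (by simp [hp]), ?_, ?_⟩, h2.1, hc⟩
  · intro p hp
    exact h4 p (by rw [hdl]; simp [hp])
  · intro p hp
    exact h5 p (by rwa [List.getLast?_cons_cons])

private lemma sum_lower (n : ℕ) {c j : ℕ} {T : List (ℕ × ℕ)} (h : VV n ((c, j) :: T)) :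
    BB n j ≤ SS n ((c, j) :: T) := by
  have hc := head_c_ge n h
  have : BB n j ≤ c * BB n j := Nat.le_mul_of_pos_left _ hc
  simp only [SS, List.map_cons, List.sum_cons]
  omega

private lemma sum_upper (n : ℕ) (hn : 1 < n) :
    ∀ (T : List (ℕ × ℕ)) (c j : ℕ), VV n ((c, j) :: T) →
      SS n ((c, j) :: T) ≤ n * BB n j := by
  intro T
  induction T with
  | nil =>
    intro c j h
    have hc : c ≤ n := (h.2.2.2.2 (c, j) rfl).2
    simp only [SS, List.map_cons, List.sum_cons, List.map_nil, List.sum_nil]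
    have := Nat.mul_le_mul_right (BB n j) hc
    omega
  | cons q T' ih =>
    intro c j h
    obtain ⟨hT, hlt, hc⟩ := tail_valid n h
    have hrec : SS n (q :: T') ≤ n * BB n q.2 := by
      obtain ⟨cq, jq⟩ := q; exact ih cq jq hT
    have hj1 : 1 ≤ j := h.2.2.1 (c, j) (by simp)
    obtain ⟨j', rfl⟩ : ∃ j', j = j' + 1 := ⟨j - 1, by omega⟩
    have hqle : BB n q.2 ≤ BB n j' := (BB_mono n hn).monotone (by omega)
    have hBs : BB n (j' + 1) = n * BB n j' + 1 := BB_succ' n hn j'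
    have hsum : SS n ((c, j' + 1) :: q :: T') = c * BB n (j' + 1) + SS n (q :: T') := by
      simp [SS]
    rw [hsum]
    have h1 : SS n (q :: T') ≤ n * BB n j' := hrec.trans (Nat.mul_le_mul_left n hqle)
    have h2 : c * BB n (j' + 1) ≤ (n - 1) * BB n (j' + 1) :=
      Nat.mul_le_mul_right _ (by omega)
    have h3 : (n - 1) * BB n (j' + 1) + (n * BB n j') + 1 = n * BB n (j' + 1) := by
      have hn1 : n - 1 + 1 = n := by omega
      calc (n - 1) * BB n (j' + 1) + n * BB n j' + 1
          = (n - 1) * BB n (j' + 1) + BB n (j' + 1) := by rw [hBs]; ring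
        _ = ((n - 1) + 1) * BB n (j' + 1) := by ring
        _ = n * BB n (j' + 1) := by rw [hn1]
    omega

/-- tail sum is < BB n j -/
private lemma tail_sum_lt (n : ℕ) (hn : 1 < n) {c j : ℕ} {T : List (ℕ × ℕ)}
    (h : VV n ((c, j) :: T)) : SS n T < BB n j := by
  have hj1 : 1 ≤ j := h.2.2.1 (c, j) (by simp)
  cases T with
  | nil => simpa [SS] using BB_pos n hn hj1
  | cons q T' =>
    obtain ⟨hT, hlt, hc⟩ := tail_valid n h
    have hrec : SS n (q :: T') ≤ n * BB n q.2 := by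
      obtain ⟨cq, jq⟩ := q; exact sum_upper n hn T' cq jq hT
    obtain ⟨j', rfl⟩ : ∃ j', j = j' + 1 := ⟨j - 1, by omega⟩
    have hqle : BB n q.2 ≤ BB n j' := (BB_mono n hn).monotone (by omega)
    have hBs : BB n (j' + 1) = n * BB n j' + 1 := BB_succ' n hn j'
    have := Nat.mul_le_mul_left n hqle
    omega

private lemma uniq (n : ℕ) (hn : 1 < n) :
    ∀ e, ∀ L1 L2 : List (ℕ × ℕ), VV n L1 → VV n L2 → SS n L1 = e → SS n L2 = e →
      L1 = L2 := by
  intro e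
  induction e using Nat.strong_induction_on with
  | _ e ih =>
    intro L1 L2 h1 h2 hs1 hs2
    obtain _ | ⟨⟨c1, j1⟩, T1⟩ := L1
    · exact absurd rfl h1.1
    obtain _ | ⟨⟨c2, j2⟩, T2⟩ := L2
    · exact absurd rfl h2.1
    -- bounds
    have hl1 : BB n j1 ≤ e := hs1 ▸ sum_lower n h1
    have hl2 : BB n j2 ≤ e := hs2 ▸ sum_lower n h2
    have hu1 : e ≤ n * BB n j1 := hs1 ▸ sum_upper n hn T1 c1 j1 h1
    have hu2 : e ≤ n * BB n j2 := hs2 ▸ sum_upper n hn T2 c2 j2 h2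
    have hj : j1 = j2 := by
      by_contra hne
      rcases Nat.lt_or_ge j1 j2 with hlt | hge
      · have : BB n (j1 + 1) ≤ BB n j2 := (BB_mono n hn).monotone (by omega)
        rw [BB_succ' n hn] at this
        omega
      · have hlt : j2 < j1 := by omega
        have : BB n (j2 + 1) ≤ BB n j1 := (BB_mono n hn).monotone (by omega)
        rw [BB_succ' n hn] at this
        omega
    subst hj
    have hr1 : SS n T1 < BB n j1 := tail_sum_lt n hn h1
    have hr2 : SS n T2 < BB n j1 := tail_sum_lt n hn h2
    have he1 : c1 * BB n j1 + SS n T1 = e := by simpa [SS] using hs1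
    have he2 : c2 * BB n j1 + SS n T2 = e := by simpa [SS] using hs2
    have hc : c1 = c2 := by
      by_contra hne
      rcases Nat.lt_or_ge c1 c2 with hlt | hge
      · have : (c1 + 1) * BB n j1 ≤ c2 * BB n j1 := Nat.mul_le_mul_right _ (by omega)
        rw [add_mul, one_mul] at this
        omega
      · have hlt : c2 < c1 := by omega
        have : (c2 + 1) * BB n j1 ≤ c1 * BB n j1 := Nat.mul_le_mul_right _ (by omega)
        rw [add_mul, one_mul] at this
        omega
    subst hc
    have hT : SS n T1 = SS n T2 := by omega
    have hBpos : 0 < BB n j1 := BB_pos n hn (h1.2.2.1 (c1, j1) (by simp))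
    have hTeq : T1 = T2 := by
      cases T1 with
      | nil =>
        cases T2 with
        | nil => rfl
        | cons q2 T2' =>
          exfalso
          have hlow : BB n q2.2 ≤ SS n (q2 :: T2') := by
            obtain ⟨cq, jq⟩ := q2
            exact sum_lower n (tail_valid n h2).1
          have hjp : 0 < q2.2 := h2.2.2.1 q2 (by simp)
          have := BB_pos n hn hjp
          have h0 : SS n (q2 :: T2') = 0 := by rw [← hT]; rfl
          omega
      | cons q1 T1' =>
        cases T2 with
        | nil =>
          exfalso
          have hlow : BB n q1.2 ≤ SS n (q1 :: T1') := by
            obtain ⟨cq, jq⟩ := q1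
            exact sum_lower n (tail_valid n h1).1
          have hjp : 0 < q1.2 := h1.2.2.1 q1 (by simp)
          have := BB_pos n hn hjp
          have h0 : SS n (q1 :: T1') = 0 := by rw [hT]; rfl
          omega
        | cons q2 T2' =>
          have hv1 := (tail_valid n h1).1
          have hv2 := (tail_valid n h2).1
          have hslt : SS n (q1 :: T1') < e := by
            have : 1 ≤ c1 * BB n j1 := by
              have := head_c_ge n h1
              exact Nat.one_le_iff_ne_zero.2 (by positivity)
            omega
          exact ih (SS n (q1 :: T1')) hslt _ _ hv1 hv2 rfl hT.symm
    rw [hTeq]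

private lemma exist (n : ℕ) (hn : 1 < n) :
    ∀ e, 0 < e → ∃ L : List (ℕ × ℕ), VV n L ∧ SS n L = e := by
  intro e
  induction e using Nat.strong_induction_on with
  | _ e ih =>
    intro he
    set j := Nat.findGreatest (fun j => BB n j ≤ e) e with hjdef
    have hP1 : BB n 1 ≤ e := by rw [BB_one]; omega
    have hj1 : 1 ≤ j := Nat.le_findGreatest (by omega) hP1
    have hjle : BB n j ≤ e := Nat.findGreatest_spec (P := fun j => BB n j ≤ e) (by omega) hP1
    have hlt : e < BB n (j + 1) := by
      by_contra hcon
      push_neg at hcon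
      have hje : j + 1 ≤ e := le_trans (BB_ge_self n hn (j + 1)) hcon
      exact Nat.findGreatest_is_greatest (P := fun j => BB n j ≤ e) (n := e)
        (by omega) hje hcon
    rw [BB_succ' n hn] at hlt
    have hBpos : 0 < BB n j := BB_pos n hn hj1
    set c := e / BB n j with hcdef
    set r := e % BB n j with hrdef
    have hdm : c * BB n j + r = e := by
      rw [hcdef, hrdef, Nat.mul_comm]; exact Nat.div_add_mod e (BB n j)
    have hrlt : r < BB n j := Nat.mod_lt _ hBpos
    have hc1 : 1 ≤ c := Nat.one_le_div_iff hBpos |>.2 hjle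
    have hcn : c ≤ n := by
      have h' : e < (n + 1) * BB n j := by rw [add_mul, one_mul]; omega
      have : c < n + 1 := (Nat.div_lt_iff_lt_mul hBpos).2 h'
      omega
    rcases Nat.eq_zero_or_pos r with hr0 | hrpos
    · refine ⟨[(c, j)], ⟨by simp, List.isChain_singleton _, ?_, by simp, ?_⟩, ?_⟩
      · intro p hp; simp at hp; subst hp; exact hj1
      · intro p hp; simp at hp; subst hp; exact ⟨hc1, hcn⟩
      · simp only [SS, List.map_cons, List.map_nil, List.sum_cons, List.sum_nil, add_zero]
        omega
    · have hrlte : r < e := by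
        have : 1 ≤ c * BB n j := Nat.one_le_iff_ne_zero.2 (by positivity)
        omega
      clear hcdef hrdef hjdef
      clear_value c r j
      obtain ⟨L', hL', hSL'⟩ := ih r hrlte hrpos
      obtain _ | ⟨⟨c', j'⟩, T'⟩ := L'
      · exact absurd rfl hL'.1
      have hlow : BB n j' ≤ r := hSL' ▸ sum_lower n hL'
      have hj'lt : j' < j := by
        by_contra hcon
        push_neg at hcon
        have : BB n j ≤ BB n j' := (BB_mono n hn).monotone hcon
        omega
      have hclt : c < n := by
        by_contra hcon
        push_neg at hcon
        have : c = n := by omega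
        subst this
        omega
      refine ⟨(c, j) :: (c', j') :: T', ⟨by simp, ?_, ?_, ?_, ?_⟩, ?_⟩
      · unfold List.Chain'; rw [List.isChain_cons_cons]; exact ⟨hj'lt, hL'.2.1⟩
      · intro p hp
        rcases List.mem_cons.1 hp with h | h
        · subst h; exact hj1
        · exact hL'.2.2.1 p h
      · intro p hp
        rw [List.dropLast_cons_of_ne_nil (by simp)] at hp
        rcases List.mem_cons.1 hp with h | h
        · subst h; exact ⟨hc1, hclt⟩
        · exact hL'.2.2.2.1 p h
      · intro p hp
        rw [List.getLast?_cons_cons] at hp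
        exact hL'.2.2.2.2 p hp
      · simp only [SS, List.map_cons, List.sum_cons] at hSL' ⊢
        omega

/-- Lemma 2.4: fix `n > 1` and set `b_j = (n^j - 1)/(n - 1)`.  Every positive integer `e`
is uniquely represented as `e = c₁ b_{j₁} + c₂ b_{j₂} + ⋯ + c_k b_{j_k}` with
`j₁ > j₂ > ⋯ > j_k > 0`, `1 ≤ cᵢ < n` for `i = 1, …, k-1`, and `1 ≤ c_k ≤ n`.
The representation is encoded as the list `L = [(c₁, j₁), …, (c_k, j_k)]`. -/
theorem unique_rep (n : ℕ) (hn : 1 < n) (e : ℕ) (he : 0 < e) :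
    ∃! L : List (ℕ × ℕ),
      L ≠ [] ∧
      List.Chain' (fun p q : ℕ × ℕ => q.2 < p.2) L ∧
      (∀ p ∈ L, 0 < p.2) ∧
      (∀ p ∈ L.dropLast, 1 ≤ p.1 ∧ p.1 < n) ∧
      (∀ p : ℕ × ℕ, L.getLast? = some p → 1 ≤ p.1 ∧ p.1 ≤ n) ∧
      (L.map fun p : ℕ × ℕ => p.1 * ((n ^ p.2 - 1) / (n - 1))).sum = e := by
  have hB : ∀ j : ℕ, (n ^ j - 1) / (n - 1) = BB n j := by
    intro j
    rw [BB, Nat.geomSum_eq hn j]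
  have key : ∀ L : List (ℕ × ℕ),
      (L.map fun p : ℕ × ℕ => p.1 * ((n ^ p.2 - 1) / (n - 1))).sum = SS n L := by
    intro L
    simp only [SS]
    congr 1
    apply List.map_congr_left
    intro p _
    rw [hB]
  obtain ⟨L, hV, hS⟩ := exist n hn e he
  refine ⟨L, ⟨hV.1, hV.2.1, hV.2.2.1, hV.2.2.2.1, hV.2.2.2.2, by rw [key]; exact hS⟩, ?_⟩
  intro L' hL'
  obtain ⟨a1, a2, a3, a4, a5, a6⟩ := hL'
  rw [key] at a6
  exact uniq n hn e L' L ⟨a1, a2, a3, a4, a5⟩ hV a6 hS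
end

section
/- For any integer n ≥ 1 and any real r ≥ 1, let B = 3r·log log q^n and define T₁(n,r) = { monic f ∈ F_q[t] : deg f = n and ω(f) > B }. Then |T₁(n,r)| < 3q^n/(log q^n)^r. If furthermore n ≥ 3 and r ≥ 2, then |T₁(n,r)| < q^n/(log q^n)^r. -/
open Polynomial

/-- `ω(f)`: the number of distinct monic irreducible factors of `f`. -/
noncomputable def omegaPoly {F : Type*} [Field F] [Fintype F] (f : F[X]) : ℕ :=
  Nat.card {P : F[X] // P.Monic ∧ Irreducible P ∧ P ∣ f}

/-- `T₁(n, r)`: monic polynomials of degree `n` with `ω(f) > B`, where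
`B = 3 r log log q^n`. -/
noncomputable def T1 (F : Type*) [Field F] [Fintype F] (n : ℕ) (r : ℝ) : Set F[X] :=
  {f : F[X] | f.Monic ∧ f.natDegree = n ∧
    3 * r * Real.log (Real.log ((Fintype.card F : ℝ) ^ n)) < (omegaPoly f : ℝ)}

open UniqueFactorizationMonoid Finset

namespace T1Aux

variable {F : Type*} [Field F] [Fintype F]

open Classical in
/-- The finset of monic polynomials of natDegree `m`. -/
noncomputable def monicFinset (F : Type*) [Field F] [Fintype F] (m : ℕ) : Finset F[X] :=
  (Finset.univ : Finset (Fin m → F)).image fun c =>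
    X ^ m + ∑ i : Fin m, C (c i) * X ^ (i : ℕ)

lemma coeff_model {m : ℕ} (c : Fin m → F) (j : ℕ) :
    (X ^ m + ∑ i : Fin m, C (c i) * X ^ (i : ℕ)).coeff j
      = if hj : j < m then c ⟨j, hj⟩ else if j = m then 1 else 0 := by
  have hsum : (∑ i : Fin m, C (c i) * X ^ (i : ℕ)).coeff j
      = if hj : j < m then c ⟨j, hj⟩ else 0 := by
    rw [finset_sum_coeff]
    simp only [coeff_C_mul, coeff_X_pow, mul_ite, mul_one, mul_zero]
    split_ifs with hj
    · rw [Finset.sum_eq_single (⟨j, hj⟩ : Fin m)]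
      · simp
      · intro b _ hb
        rw [if_neg]
        intro h
        exact hb (by ext; simp [← h])
      · simp
    · exact Finset.sum_eq_zero fun i _ => by
        rw [if_neg]; omega
  rw [coeff_add, hsum, coeff_X_pow]
  split_ifs with h1 h2
  · exact absurd h2 (by omega)
  · ring
  · ring
  · ring

lemma sum_degree_lt {m : ℕ} (c : Fin m → F) :
    (∑ i : Fin m, C (c i) * X ^ (i : ℕ)).degree < (m : WithBot ℕ) := by
  refine lt_of_le_of_lt (degree_sum_le _ _) ?_
  rw [Finset.sup_lt_iff (by exact_mod_cast WithBot.bot_lt_coe m)]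
  intro i _
  refine lt_of_le_of_lt (degree_C_mul_X_pow_le _ _) ?_
  exact_mod_cast WithBot.coe_lt_coe.2 i.isLt

lemma mem_monicFinset {m : ℕ} {f : F[X]} :
    f ∈ monicFinset F m ↔ f.Monic ∧ f.natDegree = m := by
  classical
  constructor
  · rintro hf
    simp only [monicFinset, Finset.mem_image] at hf
    obtain ⟨c, -, rfl⟩ := hf
    refine ⟨monic_X_pow_add (sum_degree_lt c), ?_⟩
    have hd : (X ^ m + ∑ i : Fin m, C (c i) * X ^ (i : ℕ)).degree = (m : WithBot ℕ) := by
      rw [add_comm, degree_add_eq_right_of_degree_lt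
        (by rw [degree_X_pow]; exact sum_degree_lt c), degree_X_pow]
    exact natDegree_eq_of_degree_eq_some hd
  · rintro ⟨hm, hdeg⟩
    simp only [monicFinset, Finset.mem_image]
    refine ⟨fun i => f.coeff i, Finset.mem_univ _, ?_⟩
    ext j
    rw [coeff_model]
    split_ifs with h1 h2
    · rfl
    · subst h2; subst hdeg; exact hm.coeff_natDegree.symm
    · subst hdeg
      exact (coeff_eq_zero_of_natDegree_lt (by omega)).symm

lemma card_monicFinset (m : ℕ) : (monicFinset F m).card = Fintype.card F ^ m := by
  classical
  rw [monicFinset, Finset.card_image_of_injective _ ?_, Finset.card_univ, Fintype.card_fun,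
    Fintype.card_fin]
  intro c c' h
  funext i
  have h2 := congrArg (fun p : F[X] => p.coeff (i : ℕ)) h
  simp only at h2
  rw [coeff_model, coeff_model, dif_pos i.isLt, dif_pos i.isLt] at h2
  simpa using h2

open Classical in
noncomputable def factorSet (f : F[X]) : Finset F[X] :=
  (normalizedFactors f).toFinset

lemma mem_factorSet {f P : F[X]} (hf : f ≠ 0) :
    P ∈ factorSet f ↔ P.Monic ∧ Irreducible P ∧ P ∣ f := by
  classical
  rw [factorSet, Multiset.mem_toFinset]
  constructor
  · intro h
    have hP0 : P ≠ 0 := fun h0 => zero_notMem_normalizedFactors f (h0 ▸ h)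
    have hmon : P.Monic := by
      have := monic_normalize hP0
      rwa [normalize_normalized_factor _ h] at this
    exact ⟨hmon, irreducible_of_normalized_factor _ h, dvd_of_mem_normalizedFactors h⟩
  · rintro ⟨hmon, hirr, hdvd⟩
    obtain ⟨q, hq, hassoc⟩ := exists_mem_normalizedFactors_of_dvd hf hirr hdvd
    have hq0 : q ≠ 0 := fun h0 => zero_notMem_normalizedFactors f (h0 ▸ hq)
    have hqmon : q.Monic := by
      have := monic_normalize hq0
      rwa [normalize_normalized_factor _ hq] at this
    rwa [eq_of_monic_of_associated hmon hqmon hassoc]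

lemma omegaPoly_eq {f : F[X]} (hf : f ≠ 0) : omegaPoly f = (factorSet f).card := by
  have hset : {P : F[X] | P.Monic ∧ Irreducible P ∧ P ∣ f} = ↑(factorSet f) := by
    ext P
    simp [mem_factorSet hf]
  calc omegaPoly f = Nat.card ↥{P : F[X] | P.Monic ∧ Irreducible P ∧ P ∣ f} := rfl
    _ = Nat.card ↥(↑(factorSet f) : Set F[X]) := by rw [hset]
    _ = (factorSet f).card := by
        rw [Nat.card_coe_set_eq, Set.ncard_coe_finset]

lemma prod_dvd_of_subset {f : F[X]} (hf : f ≠ 0) {S : Finset F[X]}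
    (hS : S ⊆ factorSet f) : (∏ P ∈ S, P) ∣ f := by
  classical
  have hle : S.val ≤ normalizedFactors f := by
    rw [Multiset.le_iff_count]
    intro P
    by_cases hP : P ∈ S
    · rw [Multiset.count_eq_one_of_mem S.nodup hP, Multiset.one_le_count_iff_mem]
      have := hS hP
      rwa [factorSet, Multiset.mem_toFinset] at this
    · simp [Multiset.count_eq_zero_of_notMem hP]
  have h1 : (∏ P ∈ S, P) = S.val.prod := by
    rw [Finset.prod_eq_multiset_prod, Multiset.map_id']
  rw [h1]
  exact dvd_trans (Multiset.prod_dvd_prod_of_le hle) (prod_normalizedFactors hf).dvd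


open Classical in
lemma key (n k : ℕ) :
    ((monicFinset F n).filter fun f => k ≤ (factorSet f).card).card * 2 ^ k
      ≤ (n + 1) * Fintype.card F ^ n := by
  classical
  set T := (monicFinset F n).filter fun f => k ≤ (factorSet f).card with hT
  set Src := T.sigma fun f => (factorSet f).powerset with hSrc
  set Tgt := (Finset.range (n + 1)).sigma
    (fun m => monicFinset F m ×ˢ monicFinset F (n - m)) with hTgt
  have hcard_tgt : Tgt.card = (n + 1) * Fintype.card F ^ n := by
    rw [hTgt, Finset.card_sigma]
    have : ∀ m ∈ Finset.range (n + 1),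
        (monicFinset F m ×ˢ monicFinset F (n - m)).card = Fintype.card F ^ n := by
      intro m hm
      rw [Finset.card_product, card_monicFinset, card_monicFinset, ← pow_add]
      congr 1
      have := Finset.mem_range.mp hm
      omega
    rw [Finset.sum_congr rfl this, Finset.sum_const, Finset.card_range, smul_eq_mul]
  have hsrc_le : T.card * 2 ^ k ≤ Src.card := by
    rw [hSrc, Finset.card_sigma]
    calc T.card * 2 ^ k = ∑ _f ∈ T, 2 ^ k := by
          rw [Finset.sum_const, smul_eq_mul, mul_comm]
      _ ≤ ∑ f ∈ T, ((factorSet f).powerset).card := by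
          refine Finset.sum_le_sum fun f hf => ?_
          rw [Finset.card_powerset]
          exact Nat.pow_le_pow_right (by norm_num) (Finset.mem_filter.mp hf).2
  have hmain : Src.card ≤ Tgt.card := by
    apply Finset.card_le_card_of_injOn
      (fun p => ⟨(∏ P ∈ p.2, P).natDegree, (∏ P ∈ p.2, P, p.1 / ∏ P ∈ p.2, P)⟩)
    · rintro ⟨f, S⟩ hp
      rw [Finset.mem_coe, hSrc, Finset.mem_sigma] at hp
      obtain ⟨hfT, hS⟩ := hp
      rw [hT, Finset.mem_filter, mem_monicFinset] at hfT
      obtain ⟨⟨hfm, hfd⟩, -⟩ := hfT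
      have hf0 : f ≠ 0 := hfm.ne_zero
      rw [Finset.mem_powerset] at hS
      set d := ∏ P ∈ S, P with hd
      have hdm : d.Monic := monic_prod_of_monic _ _ fun P hP =>
        ((mem_factorSet hf0).mp (hS hP)).1
      have hdvd : d ∣ f := prod_dvd_of_subset hf0 hS
      have hfdg : d * (f / d) = f := EuclideanDomain.mul_div_cancel' hdm.ne_zero hdvd
      have hg0 : f / d ≠ 0 := by
        intro h
        rw [h, mul_zero] at hfdg
        exact hf0 hfdg.symm
      have hgm : (f / d).Monic := by
        have := hfm
        rw [← hfdg, Monic, leadingCoeff_mul, hdm.leadingCoeff, one_mul] at this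
        exact this
      have hdeg : d.natDegree + (f / d).natDegree = n := by
        rw [← natDegree_mul hdm.ne_zero hg0, hfdg, hfd]
      rw [Finset.mem_coe, hTgt]
      simp only [Finset.mem_sigma, Finset.mem_range, Finset.mem_product, mem_monicFinset]
      exact ⟨by rw [← hd]; omega, ⟨hdm, trivial⟩, hgm, by rw [← hd]; omega⟩
    · rintro ⟨f, S⟩ hp ⟨f', S'⟩ hp' heq
      simp only [hSrc, Finset.coe_sigma, Set.mem_sigma_iff, Finset.mem_coe] at hp hp'
      obtain ⟨hfT, hS⟩ := hp
      obtain ⟨hfT', hS'⟩ := hp'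
      rw [hT, Finset.mem_filter, mem_monicFinset] at hfT hfT'
      have hf0 : f ≠ 0 := hfT.1.1.ne_zero
      have hf0' : f' ≠ 0 := hfT'.1.1.ne_zero
      rw [Finset.mem_powerset] at hS hS'
      rw [Sigma.ext_iff] at heq
      have hpair : ((∏ P ∈ S, P, f / ∏ P ∈ S, P) : F[X] × F[X])
          = (∏ P ∈ S', P, f' / ∏ P ∈ S', P) := eq_of_heq heq.2
      have hdd : (∏ P ∈ S, P) = ∏ P ∈ S', P := congrArg Prod.fst hpair
      have hgg : f / ∏ P ∈ S, P = f' / ∏ P ∈ S', P := congrArg Prod.snd hpair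
      have hff : f = f' := by
        have h1 : (∏ P ∈ S, P) * (f / ∏ P ∈ S, P) = f :=
          EuclideanDomain.mul_div_cancel'
            (monic_prod_of_monic _ _ fun P hP => ((mem_factorSet hf0).mp (hS hP)).1).ne_zero
            (prod_dvd_of_subset hf0 hS)
        have h2 : (∏ P ∈ S', P) * (f' / ∏ P ∈ S', P) = f' :=
          EuclideanDomain.mul_div_cancel'
            (monic_prod_of_monic _ _ fun P hP => ((mem_factorSet hf0').mp (hS' hP)).1).ne_zero
            (prod_dvd_of_subset hf0' hS')
        rw [← h1, ← h2, hgg, hdd]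
      have hSS : S = S' := by
        have hdir : ∀ (u v : F[X]), u ≠ 0 → v ≠ 0 → ∀ (A B : Finset F[X]),
            A ⊆ factorSet u → B ⊆ factorSet v →
            (∏ P ∈ A, P) = (∏ P ∈ B, P) → A ⊆ B := by
          intro u v hu hv A B hA hB hAB P hPA
          obtain ⟨hPm, hPi, -⟩ := (mem_factorSet hu).mp (hA hPA)
          have hPdvd : P ∣ ∏ Q ∈ B, Q := hAB ▸ Finset.dvd_prod_of_mem _ hPA
          have hPprime : Prime P := UniqueFactorizationMonoid.irreducible_iff_prime.mp hPi
          obtain ⟨Q, hQB, hPQ⟩ := hPprime.exists_mem_finset_dvd hPdvd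
          obtain ⟨hQm, hQi, -⟩ := (mem_factorSet hv).mp (hB hQB)
          have : P = Q := eq_of_monic_of_associated hPm hQm (hPi.associated_of_dvd hQi hPQ)
          rwa [this]
        exact Finset.Subset.antisymm (hdir f f' hf0 hf0' S S' hS hS' hdd)
          (hdir f' f hf0' hf0 S' S hS' hS hdd.symm)
      subst hff
      simp [hSS]
  calc T.card * 2 ^ k ≤ Src.card := hsrc_le
    _ ≤ Tgt.card := hmain
    _ = (n + 1) * Fintype.card F ^ n := hcard_tgt

end T1Aux


namespace T1Aux

variable {F : Type*} [Field F] [Fintype F]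

lemma factorSet_card_pos {f : F[X]} (hm : f.Monic) (hd : 1 ≤ f.natDegree) :
    1 ≤ (factorSet f).card := by
  classical
  have hf0 := hm.ne_zero
  have hnu : ¬IsUnit f := fun h => by
    have := Polynomial.natDegree_eq_zero_of_isUnit h
    omega
  obtain ⟨P, hPi, hPdvd⟩ := WfDvdMonoid.exists_irreducible_factor hnu hf0
  have hP0 : P ≠ 0 := hPi.ne_zero
  have hmem : normalize P ∈ factorSet f := (mem_factorSet hf0).mpr
    ⟨monic_normalize hP0, (associated_normalize P).irreducible hPi,
      dvd_trans (normalize_associated P).dvd hPdvd⟩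
  exact Finset.card_pos.mpr ⟨_, hmem⟩

end T1Aux

set_option maxHeartbeats 1000000 in
open T1Aux in
/-- Lemma 2.7: for `n ≥ 1` and `r ≥ 1`, `|T₁(n,r)| < 3 q^n / (log q^n)^r`;
if moreover `n ≥ 3` and `r ≥ 2`, then `|T₁(n,r)| < q^n / (log q^n)^r`. -/
theorem card_T1_lt (F : Type*) [Field F] [Fintype F] (n : ℕ) (hn : 1 ≤ n) (r : ℝ)
    (hr : 1 ≤ r) :
    (Nat.card (T1 F n r) : ℝ) <
        3 * (Fintype.card F : ℝ) ^ n / Real.log ((Fintype.card F : ℝ) ^ n) ^ r ∧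
      (3 ≤ n → 2 ≤ r →
        (Nat.card (T1 F n r) : ℝ) <
          (Fintype.card F : ℝ) ^ n / Real.log ((Fintype.card F : ℝ) ^ n) ^ r) := by
  classical
  set Q : ℝ := (Fintype.card F : ℝ) ^ n with hQdef
  set L : ℝ := Real.log Q with hLdef
  set B : ℝ := 3 * r * Real.log L with hBdef
  set k : ℕ := ⌊B⌋₊ + 1 with hkdef
  set Tfin : Finset F[X] :=
    (monicFinset F n).filter (fun f => k ≤ (factorSet f).card) with hTfin
  -- identify T1 with Tfin
  have hsets : T1 F n r = ↑Tfin := by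
    ext f
    simp only [T1, Set.mem_setOf_eq, hTfin, Finset.coe_filter, mem_monicFinset]
    constructor
    · rintro ⟨hm, hd, hB⟩
      refine ⟨⟨hm, hd⟩, ?_⟩
      rw [omegaPoly_eq hm.ne_zero] at hB
      by_cases h0 : 0 ≤ B
      · rw [hkdef, Nat.succ_le_iff]
        exact (Nat.floor_lt h0).mpr hB
      · have h1 : 1 ≤ (factorSet f).card := factorSet_card_pos hm (hd ▸ hn)
        rw [hkdef, Nat.floor_eq_zero.mpr (by push_neg at h0; exact lt_of_lt_of_le h0 one_pos.le)]
        omega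
    · rintro ⟨⟨hm, hd⟩, hk⟩
      refine ⟨hm, hd, ?_⟩
      rw [omegaPoly_eq hm.ne_zero]
      calc B < (k : ℝ) := by
            rw [hkdef]
            push_cast
            exact Nat.lt_floor_add_one B
        _ ≤ ((factorSet f).card : ℝ) := by exact_mod_cast hk
  have hNcard : (Nat.card (T1 F n r) : ℝ) = (Tfin.card : ℝ) := by
    rw [hsets, Nat.card_coe_set_eq, Set.ncard_coe_finset]
  set N : ℝ := (Tfin.card : ℝ) with hNdef
  have hN0 : 0 ≤ N := Nat.cast_nonneg _
  -- basic positivity facts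
  have hq2 : 2 ≤ Fintype.card F := Fintype.one_lt_card
  have h2n : (2:ℝ) ≤ (2:ℝ) ^ n := by
    calc (2:ℝ) = 2 ^ 1 := (pow_one 2).symm
      _ ≤ 2 ^ n := pow_le_pow_right₀ one_le_two hn
  have h2nQ : (2:ℝ) ^ n ≤ Q := by
    rw [hQdef]
    exact pow_le_pow_left₀ (by norm_num) (by exact_mod_cast hq2) n
  have hQ2 : (2:ℝ) ≤ Q := le_trans h2n h2nQ
  have hL0 : 0 < L := Real.log_pos (by linarith)
  have hLr0 : (0:ℝ) < L ^ r := Real.rpow_pos_of_pos hL0 r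
  -- the key counting bound, cast to ℝ
  have hkey : N * 2 ^ k ≤ ((n:ℝ) + 1) * Q := by
    have := key (F := F) n k
    rw [← hTfin] at this
    have hcast : ((Tfin.card * 2 ^ k : ℕ) : ℝ) ≤ (((n + 1) * Fintype.card F ^ n : ℕ) : ℝ) :=
      Nat.cast_le.mpr this
    push_cast at hcast
    rw [hQdef]
    convert hcast using 2
  rw [hNcard]
  by_cases hQ3 : (3:ℝ) ≤ Q
  · -- main case
    have hL1 : 1 < L := by
      have h3 : Real.log 3 ≤ L := by
        rw [hLdef]
        exact Real.log_le_log (by norm_num) hQ3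
      have : 1 < Real.log 3 := by
        rw [← Real.log_exp 1]
        exact Real.log_lt_log (Real.exp_pos 1) (by
          have := Real.exp_one_lt_d9
          linarith)
      linarith
    have hLn : (n:ℝ) * Real.log 2 ≤ L := by
      rw [hLdef, hQdef, Real.log_pow]
      have : Real.log 2 ≤ Real.log (Fintype.card F : ℝ) :=
        Real.log_le_log (by norm_num) (by exact_mod_cast hq2)
      have hn0 : (0:ℝ) ≤ (n:ℝ) := Nat.cast_nonneg n
      nlinarith
    set E : ℝ := 3 * r * Real.log 2 with hEdef
    -- L^E ≤ 2^k
    have hLE2k : L ^ E ≤ (2:ℝ) ^ k := by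
      have h1 : L ^ E = Real.exp (B * Real.log 2) := by
        rw [Real.rpow_def_of_pos hL0]
        congr 1
        rw [hEdef, hBdef]
        ring
      have h2 : ((2:ℝ) ^ k : ℝ) = Real.exp ((k:ℝ) * Real.log 2) := by
        rw [← Real.rpow_natCast 2 k, Real.rpow_def_of_pos (by norm_num)]
        congr 1
        ring
      rw [h1, h2]
      apply Real.exp_le_exp.mpr
      have hBk : B ≤ (k:ℝ) := by
        rw [hkdef]
        push_cast
        exact (Nat.lt_floor_add_one B).le
      nlinarith [Real.log_pos (show (1:ℝ) < 2 by norm_num), hBk]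
    have hkeyE : N * L ^ E ≤ ((n:ℝ) + 1) * Q :=
      le_trans (mul_le_mul_of_nonneg_left hLE2k hN0) hkey
    have hc1 : (1:ℝ) ≤ 3 * Real.log 2 - 1 := by
      nlinarith [Real.log_two_gt_d9]
    have hEr1 : 1 ≤ E - r := by
      have : E - r = (3 * Real.log 2 - 1) * r := by rw [hEdef]; ring
      rw [this]
      nlinarith
    have hLEr : L ≤ L ^ (E - r) := by
      calc L = L ^ (1:ℝ) := (Real.rpow_one L).symm
        _ ≤ L ^ (E - r) := Real.rpow_le_rpow_of_exponent_le hL1.le hEr1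
    have main : ∀ C : ℝ, 0 < C → ((n:ℝ) + 1) < C * L ^ (E - r) → N < C * Q / L ^ r := by
      intro C hC hnC
      rw [lt_div_iff₀ hLr0]
      have hsplit : L ^ r * L ^ (E - r) = L ^ E := by
        rw [← Real.rpow_add hL0]
        ring_nf
      have h1 : N * L ^ r * L ^ (E - r) ≤ ((n:ℝ) + 1) * Q := by
        rw [mul_assoc, hsplit]
        exact hkeyE
      have h2 : ((n:ℝ) + 1) * Q < C * Q * L ^ (E - r) := by
        calc ((n:ℝ) + 1) * Q < C * L ^ (E - r) * Q :=
              mul_lt_mul_of_pos_right hnC (by linarith)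
          _ = C * Q * L ^ (E - r) := by ring
      exact lt_of_mul_lt_mul_right (lt_of_le_of_lt h1 h2)
        (Real.rpow_pos_of_pos hL0 (E - r)).le
    constructor
    · refine main 3 (by norm_num) ?_
      have hn1 : (1:ℝ) ≤ (n:ℝ) := by exact_mod_cast hn
      calc ((n:ℝ) + 1) < 3 * ((n:ℝ) * Real.log 2) := by
            nlinarith [Real.log_two_gt_d9]
        _ ≤ 3 * L := by linarith
        _ ≤ 3 * L ^ (E - r) := by linarith
    · intro hn3 hr2
      refine lt_of_lt_of_le (main 1 one_pos ?_) (le_of_eq (by ring))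
      have hn3' : (3:ℝ) ≤ (n:ℝ) := by exact_mod_cast hn3
      have hEr2 : (2:ℝ) ≤ E - r := by
        have : E - r = (3 * Real.log 2 - 1) * r := by rw [hEdef]; ring
        rw [this]
        nlinarith
      have hL2 : L ^ ((2:ℕ):ℝ) ≤ L ^ (E - r) :=
        Real.rpow_le_rpow_of_exponent_le hL1.le (by push_cast; linarith)
      have hLL : L * L ≤ L ^ (E - r) := by
        rw [Real.rpow_natCast] at hL2
        calc L * L = L ^ (2:ℕ) := by ring
          _ ≤ L ^ (E - r) := hL2
      have hp : ((n:ℝ) * Real.log 2) * ((n:ℝ) * Real.log 2) ≤ L * L := by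
        have h0 : (0:ℝ) ≤ (n:ℝ) * Real.log 2 := by positivity
        nlinarith
      have hll : (0.48:ℝ) ≤ Real.log 2 * Real.log 2 := by
        nlinarith [Real.log_two_gt_d9]
      have h48 : (0.48:ℝ) * ((n:ℝ) * (n:ℝ)) ≤ ((n:ℝ) * Real.log 2) * ((n:ℝ) * Real.log 2) := by
        nlinarith [sq_nonneg (n:ℝ)]
      have hfin : ((n:ℝ) + 1) < L * L := by
        nlinarith
      rw [one_mul]
      linarith
  · -- small case : Q < 3, hence q^n = 2
    push_neg at hQ3
    have hQnat : Fintype.card F ^ n < 3 := by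
      by_contra h
      push_neg at h
      have : (3:ℝ) ≤ Q := by
        rw [hQdef]
        exact_mod_cast h
      linarith
    have hQle2 : Q ≤ 2 := by
      have h2 : Fintype.card F ^ n ≤ 2 := by omega
      rw [hQdef]
      exact_mod_cast h2
    have hLlt1 : L < 1 := by
      have : L ≤ Real.log 2 := by
        rw [hLdef]
        exact Real.log_le_log (by linarith) hQle2
      nlinarith [Real.log_two_lt_d9]
    have hLr1 : L ^ r < 1 := by
      calc L ^ r ≤ L ^ (1:ℝ) :=
            Real.rpow_le_rpow_of_exponent_ge hL0 hLlt1.le hr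
        _ = L := Real.rpow_one L
        _ < 1 := hLlt1
    have hNQ : N ≤ Q := by
      rw [hNdef, hQdef, hTfin]
      calc ((Finset.card ((monicFinset F n).filter fun f => k ≤ (factorSet f).card)) : ℝ)
          ≤ ((monicFinset F n).card : ℝ) := by
            exact_mod_cast Finset.card_filter_le _ _
        _ = (Fintype.card F : ℝ) ^ n := by
            rw [card_monicFinset]
            push_cast
            ring
    constructor
    · rw [lt_div_iff₀ hLr0]
      calc N * L ^ r ≤ Q * L ^ r := mul_le_mul_of_nonneg_right hNQ hLr0.le
        _ < Q * 1 := mul_lt_mul_of_pos_left hLr1 (by linarith)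
        _ ≤ 3 * Q := by linarith
    · intro hn3 _
      exfalso
      have h8 : (8:ℝ) ≤ Q := by
        calc (8:ℝ) = 2 ^ 3 := by norm_num
          _ ≤ 2 ^ n := pow_le_pow_right₀ one_le_two hn3
          _ ≤ Q := h2nQ
      linarith
end

section
/- For any integer n ≥ 1 and any real r ≥ 1, let D = 2r·log log q^n and define T₂(n,r) = { monic f ∈ F_q[t] : deg f = n and P² divides f for some irreducible polynomial P with deg P > D }. If D ≥ 4, then |T₂(n,r)| < q^n/(log q^n)^r. -/
open Polynomial

/-- `T₂(n, r)`: monic polynomials `f` of degree `n` such that `P² ∣ f` for some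
irreducible polynomial `P` with `deg P > D`, where `D = 2 r log log q^n`. -/
noncomputable def T2 (F : Type*) [Field F] [Fintype F] (n : ℕ) (r : ℝ) : Set F[X] :=
  {f : F[X] | f.Monic ∧ f.natDegree = n ∧
    ∃ P : F[X], Irreducible P ∧
      2 * r * Real.log (Real.log ((Fintype.card F : ℝ) ^ n)) < (P.natDegree : ℝ) ∧
      P ^ 2 ∣ f}

/-- Auxiliary set : polynomials of the form `P^2 * g` with `P` monic of degree `d`
and `g` monic of degree `n - 2d`. -/
def Aux2 (F : Type*) [Field F] [Fintype F] (n d : ℕ) : Set F[X] :=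
  {f : F[X] | ∃ P g : F[X], P.Monic ∧ P.natDegree = d ∧ g.Monic ∧
    g.natDegree = n - 2*d ∧ 2*d ≤ n ∧ f = P^2 * g}

lemma monic_eq_sum {F : Type*} [Field F] {P : F[X]} {d : ℕ} (hP : P.Monic)
    (hd : P.natDegree = d) :
    P = X^d + ∑ i ∈ Finset.range d, C (P.coeff i) * X^i := by
  conv_lhs => rw [P.as_sum_range_C_mul_X_pow]
  rw [hd, Finset.sum_range_succ]
  have : P.coeff d = 1 := by rw [← hd]; exact hP.coeff_natDegree
  rw [this, map_one, one_mul, add_comm]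

lemma aux2_card {F : Type*} [Field F] [Fintype F] (n d : ℕ) :
    (Aux2 F n d).Finite ∧ Nat.card (Aux2 F n d) ≤ Fintype.card F ^ (n - d) := by
  classical
  have hW : ∀ x : Aux2 F n d, ∃ Pg : F[X] × F[X], Pg.1.Monic ∧ Pg.1.natDegree = d ∧
      Pg.2.Monic ∧ Pg.2.natDegree = n - 2*d ∧ 2*d ≤ n ∧ (x : F[X]) = Pg.1^2 * Pg.2 := by
    rintro ⟨x, P, g, h1, h2, h3, h4, h5, h6⟩
    exact ⟨(P, g), h1, h2, h3, h4, h5, h6⟩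
  choose W h1 h2 h3 h4 h5 h6 using hW
  set φ : Aux2 F n d → (Fin (n - d) → F) := fun x i =>
    if (i : ℕ) < d then (W x).1.coeff i else (W x).2.coeff ((i : ℕ) - d) with hφ
  have hinj : Function.Injective φ := by
    intro x y hxy
    have hdn : d ≤ n - d := by have := h5 x; omega
    have hP : (W x).1 = (W y).1 := by
      ext i
      rcases lt_trichotomy i d with hi | hi | hi
      · have hi' : i < n - d := lt_of_lt_of_le hi hdn
        have := congrFun hxy ⟨i, hi'⟩
        simpa [hφ, hi] using this
      · subst hi
        rw [← h2 x, (h1 x).coeff_natDegree, h2 x, ← h2 y, (h1 y).coeff_natDegree]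
      · rw [coeff_eq_zero_of_natDegree_lt (by rw [h2 x]; exact hi),
          coeff_eq_zero_of_natDegree_lt (by rw [h2 y]; exact hi)]
    have hg : (W x).2 = (W y).2 := by
      ext i
      rcases lt_trichotomy i (n - 2*d) with hi | hi | hi
      · have h5x := h5 x
        have hi' : d + i < n - d := by omega
        have := congrFun hxy ⟨d + i, hi'⟩
        simp only [hφ] at this
        rw [if_neg (by omega), if_neg (by omega)] at this
        simpa using this
      · subst hi
        rw [← h4 x, (h3 x).coeff_natDegree, h4 x, ← h4 y, (h3 y).coeff_natDegree]
      · rw [coeff_eq_zero_of_natDegree_lt (by rw [h4 x]; exact hi),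
          coeff_eq_zero_of_natDegree_lt (by rw [h4 y]; exact hi)]
    have : (x : F[X]) = (y : F[X]) := by rw [h6 x, h6 y, hP, hg]
    exact Subtype.ext this
  have hfin : Finite (Aux2 F n d) := Finite.of_injective φ hinj
  refine ⟨Set.finite_coe_iff.mp hfin, ?_⟩
  calc Nat.card (Aux2 F n d) ≤ Nat.card (Fin (n - d) → F) :=
        Nat.card_le_card_of_injective φ hinj
    _ = Fintype.card F ^ (n - d) := by simp [Nat.card_eq_fintype_card]

lemma geom_Icc_le {x : ℝ} (hx0 : 0 ≤ x) (hx : x ≤ 1/2) (m n : ℕ) :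
    ∑ d ∈ Finset.Icc m n, x ^ d ≤ 2 * x ^ m := by
  rcases le_or_gt m n with h | h
  · have key : ∀ k, m ≤ k → ∑ d ∈ Finset.Icc m k, x ^ d ≤ 2 * x ^ m - x ^ k := by
      intro k hk
      induction k, hk using Nat.le_induction with
      | base => rw [Finset.Icc_self, Finset.sum_singleton]; ring_nf; rfl
      | succ k hk ih =>
        rw [Finset.sum_Icc_succ_top (by omega)]
        have hxk : (0:ℝ) ≤ x ^ k := pow_nonneg hx0 k
        have hs : x ^ (k+1) = x ^ k * x := pow_succ x k
        nlinarith
    have := key n h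
    nlinarith [pow_nonneg hx0 n]
  · rw [Finset.Icc_eq_empty_of_lt h, Finset.sum_empty]
    positivity

/-- Lemma 2.8: for `n ≥ 1`, `r ≥ 1` and `D = 2 r log log q^n ≥ 4`, one has
`|T₂(n,r)| < q^n / (log q^n)^r`. -/
theorem card_T2_lt (F : Type*) [Field F] [Fintype F] (n : ℕ) (hn : 1 ≤ n) (r : ℝ)
    (hr : 1 ≤ r)
    (hD : 4 ≤ 2 * r * Real.log (Real.log ((Fintype.card F : ℝ) ^ n))) :
    (Nat.card (T2 F n r) : ℝ) <
      (Fintype.card F : ℝ) ^ n / Real.log ((Fintype.card F : ℝ) ^ n) ^ r := by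
  classical
  set q : ℕ := Fintype.card F with hq
  have hq2 : 2 ≤ q := Fintype.one_lt_card
  set L : ℝ := Real.log ((q : ℝ) ^ n) with hL
  set D : ℝ := 2 * r * Real.log L with hDdef
  set m : ℕ := Nat.floor D + 1 with hm
  -- basic positivity facts
  have hq1 : (1 : ℝ) < (q : ℝ) := by exact_mod_cast hq2.trans_lt' one_lt_two
  have hq0 : (0 : ℝ) < (q : ℝ) := by linarith
  have hr0 : (0 : ℝ) < r := lt_of_lt_of_le one_pos hr
  have hlogL : 0 < Real.log L := by nlinarith
  have hlogq : (0 : ℝ) < Real.log q := Real.log_pos hq1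
  have hL0 : (0 : ℝ) < L := by
    rw [hL, Real.log_pow]
    have : (1 : ℝ) ≤ n := by exact_mod_cast hn
    nlinarith
  have hL1 : (1 : ℝ) < L := (Real.log_pos_iff hL0.le).mp hlogL
  have hLr : L ^ r = Real.exp (r * Real.log L) := by rw [Real.rpow_def_of_pos hL0, mul_comm]
  have hLr0 : (0 : ℝ) < L ^ r := Real.rpow_pos_of_pos hL0 r
  have hD0 : (0 : ℝ) ≤ D := by linarith
  have hmD : D < (m : ℕ) := by
    have := Nat.lt_floor_add_one D
    push_cast [hm]
    push_cast at this
    linarith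
  -- Step 1 : T2 is covered by the Aux2 sets for d ∈ Icc m n
  have hsub : ∀ f ∈ T2 F n r, ∃ d ∈ Finset.Icc m n, f ∈ Aux2 F n d := by
    rintro f ⟨hfm, hfd, P, hPirr, hPdeg, hPdvd⟩
    set d : ℕ := P.natDegree with hd
    have hP0 : P ≠ 0 := hPirr.ne_zero
    have hPm : (normalize P).Monic := monic_normalize hP0
    have hPnd : (normalize P).natDegree = d := by
      rw [hd]
      exact natDegree_eq_of_degree_eq degree_normalize
    have hdvd : (normalize P) ^ 2 ∣ f :=
      dvd_trans (pow_dvd_pow_of_dvd (normalize_dvd_iff.mpr dvd_rfl) 2) hPdvd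
    obtain ⟨g, hg⟩ := hdvd
    have hgm : g.Monic := ((hPm.pow 2).of_mul_monic_left (hg ▸ hfm))
    have hdeg : n = 2 * d + g.natDegree := by
      rw [← hfd, hg, (hPm.pow 2).natDegree_mul hgm, hPm.natDegree_pow, hPnd]
    have hmd : m ≤ d := by
      rw [hm]
      have : Nat.floor D < d := (Nat.floor_lt hD0).mpr hPdeg
      omega
    refine ⟨d, Finset.mem_Icc.mpr ⟨hmd, by omega⟩,
      normalize P, g, hPm, hPnd, hgm, by omega, by omega, hg⟩
  -- Step 2 : counting
  have hAfin : ∀ d, (Aux2 F n d).Finite := fun d => (aux2_card n d).1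
  have hT2fin : (T2 F n r).Finite := by
    refine Set.Finite.subset (Set.Finite.biUnion (Finset.Icc m n).finite_toSet
      (fun d _ => hAfin d)) ?_
    intro f hf
    obtain ⟨d, hd1, hd2⟩ := hsub f hf
    exact Set.mem_biUnion hd1 hd2
  have hcard : Nat.card (T2 F n r) ≤ ∑ d ∈ Finset.Icc m n, q ^ (n - d) := by
    have h1 : Nat.card (T2 F n r) = hT2fin.toFinset.card := by
      rw [Nat.card_coe_set_eq, Set.ncard_eq_toFinset_card _ hT2fin]
    have h2 : hT2fin.toFinset ⊆ (Finset.Icc m n).biUnion (fun d => (hAfin d).toFinset) := by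
      intro f hf
      rw [Set.Finite.mem_toFinset] at hf
      obtain ⟨d, hd1, hd2⟩ := hsub f hf
      exact Finset.mem_biUnion.mpr ⟨d, hd1, (hAfin d).mem_toFinset.mpr hd2⟩
    calc Nat.card (T2 F n r) = hT2fin.toFinset.card := h1
      _ ≤ ((Finset.Icc m n).biUnion (fun d => (hAfin d).toFinset)).card :=
          Finset.card_le_card h2
      _ ≤ ∑ d ∈ Finset.Icc m n, (hAfin d).toFinset.card := Finset.card_biUnion_le
      _ ≤ ∑ d ∈ Finset.Icc m n, q ^ (n - d) := by
          refine Finset.sum_le_sum fun d _ => ?_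
          rw [← Set.ncard_eq_toFinset_card _ (hAfin d), ← Nat.card_coe_set_eq]
          exact (aux2_card n d).2
  -- Step 3 : real estimates
  have hx0 : (0:ℝ) ≤ (q:ℝ)⁻¹ := by positivity
  have hx2 : (q:ℝ)⁻¹ ≤ 1/2 := by
    rw [inv_le_comm₀ hq0 (by norm_num)]
    norm_num
    exact_mod_cast hq2
  have hsum : ((∑ d ∈ Finset.Icc m n, q ^ (n - d) : ℕ) : ℝ)
      ≤ (q:ℝ)^n * (2 * ((q:ℝ)⁻¹)^m) := by
    push_cast
    calc ∑ d ∈ Finset.Icc m n, (q:ℝ) ^ (n - d)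
        = ∑ d ∈ Finset.Icc m n, (q:ℝ)^n * ((q:ℝ)⁻¹)^d := by
          refine Finset.sum_congr rfl fun d hd => ?_
          have hdn : d ≤ n := (Finset.mem_Icc.mp hd).2
          rw [pow_sub₀ _ (ne_of_gt hq0) hdn, inv_pow]
      _ = (q:ℝ)^n * ∑ d ∈ Finset.Icc m n, ((q:ℝ)⁻¹)^d := by rw [Finset.mul_sum]
      _ ≤ (q:ℝ)^n * (2 * ((q:ℝ)⁻¹)^m) := by
          have := geom_Icc_le hx0 hx2 m n
          have hqn : (0:ℝ) ≤ (q:ℝ)^n := by positivity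
          nlinarith
  -- Step 4 : the key analytic inequality `2 L^r < q^m`
  have hkey : 2 * L ^ r < (q:ℝ) ^ m := by
    have hrlogL : r * Real.log L = D / 2 := by rw [hDdef]; ring
    have hlog2 : (0.6931471803 : ℝ) < Real.log 2 := Real.log_two_gt_d9
    have e1 : 2 * L ^ r = Real.exp (Real.log 2 + D / 2) := by
      rw [hLr, hrlogL, Real.exp_add, Real.exp_log two_pos]
    have e2 : Real.exp (Real.log 2 + D / 2) < Real.exp ((m:ℝ) * Real.log 2) := by
      apply Real.exp_lt_exp.mpr
      nlinarith
    have e3 : Real.exp ((m:ℝ) * Real.log 2) = (2:ℝ) ^ m := by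
      rw [Real.exp_nat_mul, Real.exp_log two_pos]
    have e4 : (2:ℝ) ^ m ≤ (q:ℝ) ^ m := by
      apply pow_le_pow_left₀ (by norm_num)
      exact_mod_cast hq2
    rw [e1]
    calc Real.exp (Real.log 2 + D / 2) < Real.exp ((m:ℝ) * Real.log 2) := e2
      _ = (2:ℝ)^m := e3
      _ ≤ (q:ℝ)^m := e4
  -- conclusion
  have hqm : (0:ℝ) < (q:ℝ)^m := by positivity
  have hqn : (0:ℝ) < (q:ℝ)^n := by positivity
  calc (Nat.card (T2 F n r) : ℝ)
      ≤ ((∑ d ∈ Finset.Icc m n, q ^ (n - d) : ℕ) : ℝ) := by exact_mod_cast hcard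
    _ ≤ (q:ℝ)^n * (2 * ((q:ℝ)⁻¹)^m) := hsum
    _ < (q:ℝ)^n / L ^ r := by
        rw [inv_pow, div_eq_mul_inv]
        apply mul_lt_mul_of_pos_left _ hqn
        rw [mul_inv_lt_iff₀ hqm, inv_mul_eq_div, lt_div_iff₀ hLr0]
        linarith
end

section
/- The Smarandache function S on F_q[t] satisfies: (1) for any polynomial f ∈ F_q[t] and any nonzero a ∈ F_q, S(af) = S(f); (2) for any nonzero polynomial f ∈ F_q[t], S(f) ≤ t^{deg f} (i.e. δ(S(f)) ≤ δ(t^{deg f}) = q^{deg f}); (3) for any irreducible polynomial f ∈ F_q[t], S(f) = t^{deg f}. -/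
open Polynomial Finset

variable {F : Type*} [Field F] [Fintype F] [DecidableEq F]

private lemma sum_digits_lt {b : ℕ} (hb : 0 < b) (d : ℕ → ℕ) (hd : ∀ j, d j < b) (k : ℕ) :
    ∑ j ∈ range k, d j * b ^ j < b ^ k := by
  induction k with
  | zero => simpa using hb
  | succ k ih =>
    rw [Finset.sum_range_succ, pow_succ]
    have h1 : d k * b ^ k ≤ (b - 1) * b ^ k := Nat.mul_le_mul_right _ (by have := hd k; omega)
    have h2 : 0 < b ^ k := Nat.pow_pos hb
    have h3 : (b - 1) * b ^ k + b ^ k = b ^ k * b := by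
      have : b - 1 + 1 = b := by omega
      calc (b - 1) * b ^ k + b ^ k = (b - 1 + 1) * b ^ k := by ring
        _ = b ^ k * b := by rw [this]; ring
    omega

private lemma sum_digits_eq (b m N : ℕ) :
    ∑ j ∈ range N, m / b ^ j % b * b ^ j = m % b ^ N := by
  induction N with
  | zero => simp [Nat.mod_one]
  | succ N ih =>
    rw [Finset.sum_range_succ, ih, pow_succ, Nat.mod_mul]
    ring

private lemma dig_extract {b : ℕ} (hb : 1 < b) :
    ∀ (k N : ℕ) (d : ℕ → ℕ), (∀ j, d j < b) →
    (∑ j ∈ range N, d j * b ^ j) / b ^ k % b = if k < N then d k else 0 := by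
  have hb0 : 0 < b := by omega
  intro k
  induction k with
  | zero =>
    intro N d hd
    cases N with
    | zero => simp
    | succ N =>
      rw [Finset.sum_range_succ']
      have hT : ∑ i ∈ range N, d (i + 1) * b ^ (i + 1) = b * ∑ i ∈ range N, d (i + 1) * b ^ i := by
        rw [Finset.mul_sum]; exact Finset.sum_congr rfl fun i _ => by ring
      rw [hT]
      simp only [pow_zero, mul_one, Nat.pow_zero, Nat.div_one]
      rw [Nat.mul_add_mod]
      simp [Nat.mod_eq_of_lt (hd 0)]
  | succ k ih =>
    intro N d hd
    cases N with
    | zero => simp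
    | succ N =>
      rw [Finset.sum_range_succ']
      have hT : ∑ i ∈ range N, d (i + 1) * b ^ (i + 1) = b * ∑ i ∈ range N, d (i + 1) * b ^ i := by
        rw [Finset.mul_sum]; exact Finset.sum_congr rfl fun i _ => by ring
      rw [hT]
      simp only [pow_zero, mul_one]
      rw [pow_succ, mul_comm (b ^ k) b, ← Nat.div_div_eq_div_mul,
        Nat.mul_add_div hb0, Nat.div_eq_of_lt (hd 0), Nat.add_zero,
        ih N (fun j => d (j + 1)) (fun j => hd (j + 1))]
      simp [Nat.succ_lt_succ_iff]

variable (a : Fin (Fintype.card F) ≃ F)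

private lemma hq : 1 < Fintype.card F := Fintype.one_lt_card

private lemma m_lt_pow {m k : ℕ} (h : m ≤ k) : m < Fintype.card F ^ k :=
  lt_of_lt_of_le (Nat.lt_two_pow_self (n := m)) <|
    le_trans (Nat.pow_le_pow_right (by norm_num) h) (Nat.pow_le_pow_left (hq (F := F)) k)

private lemma coeff_deltaInv (h0 : a 0 = 0) (m k : ℕ) :
    (deltaInv a m).coeff k
      = a ⟨m / Fintype.card F ^ k % Fintype.card F, Nat.mod_lt _ Fintype.card_pos⟩ := by
  rw [deltaInv, Polynomial.finset_sum_coeff]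
  simp only [Polynomial.coeff_C_mul, Polynomial.coeff_X_pow, mul_ite, mul_one, mul_zero]
  rw [Finset.sum_ite_eq (Finset.range (m + 1))]
  by_cases hk : k ∈ Finset.range (m + 1)
  · rw [if_pos hk]
  · rw [if_neg hk]
    have hk' : m < Fintype.card F ^ k := m_lt_pow (by simp at hk; omega)
    have : m / Fintype.card F ^ k % Fintype.card F = 0 := by
      rw [Nat.div_eq_of_lt hk', Nat.zero_mod]
    symm
    convert h0 using 2
    exact Fin.ext this

private lemma natDegree_deltaInv_le (m : ℕ) : (deltaInv a m).natDegree ≤ m := by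
  rw [deltaInv]
  apply Polynomial.natDegree_sum_le_of_forall_le
  intro j hj
  apply le_trans (Polynomial.natDegree_mul_le)
  simp only [Polynomial.natDegree_C, Polynomial.natDegree_X_pow, zero_add]
  simp at hj; omega

private lemma delta_deltaInv (h0 : a 0 = 0) (m : ℕ) : delta a (deltaInv a m) = m := by
  have hD := natDegree_deltaInv_le a m
  have hdig : ∀ j, ((a.symm ((deltaInv a m).coeff j)) : ℕ)
      = m / Fintype.card F ^ j % Fintype.card F := by
    intro j
    rw [coeff_deltaInv a h0 m j, Equiv.symm_apply_apply]
  rw [delta]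
  have hDm : (deltaInv a m).natDegree + 1 ≤ m + 1 := by omega
  have hz : ∀ j ∈ Finset.range (m + 1), j ∉ Finset.range ((deltaInv a m).natDegree + 1) →
      ((a.symm ((deltaInv a m).coeff j)) : ℕ) * Fintype.card F ^ j = 0 := by
    intro j _ hj
    simp only [Finset.mem_range, not_lt] at hj
    rw [Polynomial.coeff_eq_zero_of_natDegree_lt (by omega)]
    have hs : a.symm 0 = 0 := by rw [← h0, Equiv.symm_apply_apply]
    rw [hs]
    simp
  rw [Finset.sum_subset (Finset.range_subset_range.mpr hDm) hz]
  calc ∑ j ∈ Finset.range (m + 1),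
        ((a.symm ((deltaInv a m).coeff j)) : ℕ) * Fintype.card F ^ j
      = ∑ j ∈ Finset.range (m + 1),
        m / Fintype.card F ^ j % Fintype.card F * Fintype.card F ^ j :=
        Finset.sum_congr rfl fun j _ => by rw [hdig]
    _ = m % Fintype.card F ^ (m + 1) := sum_digits_eq _ m (m + 1)
    _ = m := Nat.mod_eq_of_lt (m_lt_pow (Nat.le_succ m))

private lemma deltaInv_delta (h0 : a 0 = 0) (f : F[X]) : deltaInv a (delta a f) = f := by
  ext k
  rw [coeff_deltaInv a h0]
  have hd : ∀ j, ((a.symm (f.coeff j)) : ℕ) < Fintype.card F := fun j => (a.symm (f.coeff j)).is_lt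
  have hdig := dig_extract (hq (F := F)) k (f.natDegree + 1)
    (fun j => ((a.symm (f.coeff j)) : ℕ)) hd
  rw [delta] at *
  by_cases hk : k < f.natDegree + 1
  · rw [← Equiv.apply_symm_apply a (f.coeff k)]
    congr 1
    exact Fin.ext (by simp only [hdig, if_pos hk])
  · rw [Polynomial.coeff_eq_zero_of_natDegree_lt (by omega)]
    convert h0 using 2
    exact Fin.ext (by simp only [hdig, if_neg hk]; rfl)

private lemma deltaInv_injective (h0 : a 0 = 0) : Function.Injective (deltaInv a) :=
  Function.LeftInverse.injective (delta_deltaInv a h0)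

private lemma delta_X_pow (h0 : a 0 = 0) (h1 : a 1 = 1) (n : ℕ) :
    delta a ((X : F[X]) ^ n) = Fintype.card F ^ n := by
  have hs0 : a.symm 0 = 0 := by rw [← h0, Equiv.symm_apply_apply]
  have hs1 : a.symm 1 = 1 := by rw [← h1, Equiv.symm_apply_apply]
  rw [delta, Polynomial.natDegree_X_pow, Finset.sum_range_succ]
  have hzero : ∀ j ∈ Finset.range n,
      ((a.symm (((X : F[X]) ^ n).coeff j)) : ℕ) * Fintype.card F ^ j = 0 := by
    intro j hj
    simp only [Finset.mem_range] at hj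
    rw [Polynomial.coeff_X_pow, if_neg (by omega), hs0]
    simp
  have hv1 : ((1 : Fin (Fintype.card F)) : ℕ) = 1 := by
    rw [Fin.val_one']
    exact Nat.mod_eq_of_lt (hq (F := F))
  rw [Finset.sum_congr rfl hzero, Finset.sum_const, smul_zero, zero_add,
    Polynomial.coeff_X_pow, if_pos rfl, hs1, hv1, one_mul]

private lemma deltaInv_card_pow (h0 : a 0 = 0) (h1 : a 1 = 1) (n : ℕ) :
    deltaInv a (Fintype.card F ^ n) = (X : F[X]) ^ n := by
  rw [← delta_X_pow a h0 h1, deltaInv_delta a h0]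

private lemma delta_lt_pow (h0 : a 0 = 0) {f : F[X]} {n : ℕ} (hf : f.degree < (n : ℕ)) :
    delta a f < Fintype.card F ^ n := by
  by_cases h : f = 0
  · subst h
    rw [delta]
    have hs0 : a.symm 0 = 0 := by rw [← h0, Equiv.symm_apply_apply]
    simp [hs0]
    exact Nat.pow_pos Fintype.card_pos
  · have hdeg : f.natDegree < n := by
      rwa [Polynomial.degree_eq_natDegree h, Nat.cast_lt] at hf
    have hd : ∀ j, ((a.symm (f.coeff j)) : ℕ) < Fintype.card F := fun j => (a.symm (f.coeff j)).is_lt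
    calc delta a f < Fintype.card F ^ (f.natDegree + 1) :=
          sum_digits_lt Fintype.card_pos _ hd _
      _ ≤ Fintype.card F ^ n := Nat.pow_le_pow_right Fintype.card_pos hdeg

private lemma degree_deltaInv_lt (h0 : a 0 = 0) {m n : ℕ} (hm : m < Fintype.card F ^ n) :
    (deltaInv a m).degree < (n : ℕ) := by
  rw [Polynomial.degree_lt_iff_coeff_zero]
  intro k hk
  rw [coeff_deltaInv a h0]
  have hmk : m < Fintype.card F ^ k :=
    lt_of_lt_of_le hm (Nat.pow_le_pow_right Fintype.card_pos hk)
  have : m / Fintype.card F ^ k % Fintype.card F = 0 := by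
    rw [Nat.div_eq_of_lt hmk, Nat.zero_mod]
  convert h0 using 2
  exact Fin.ext this

private lemma fact_A (h0 : a 0 = 0) (h1 : a 1 = 1) {f : F[X]} (hf : f ≠ 0) :
    f ∣ pfact a (deltaInv a (Fintype.card F ^ f.natDegree)) := by
  rw [deltaInv_card_pow a h0 h1, pfact, delta_X_pow a h0 h1]
  have hg : (f * C f.leadingCoeff⁻¹).Monic := Polynomial.monic_mul_leadingCoeff_inv hf
  set g : F[X] := f * C f.leadingCoeff⁻¹ with hgdef
  have hgn : g.natDegree = f.natDegree := by
    rw [hgdef]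
    exact Polynomial.natDegree_mul_C (inv_ne_zero (Polynomial.leadingCoeff_ne_zero.mpr hf))
  set r : F[X] := X ^ f.natDegree - g with hrdef
  have hrd : r.degree < (f.natDegree : ℕ) := by
    by_cases hr0 : r = 0
    · rw [hr0]
      exact WithBot.bot_lt_coe _
    · have h1' : (X ^ f.natDegree : F[X]).degree = g.degree := by
        rw [Polynomial.degree_X_pow, Polynomial.degree_eq_natDegree hg.ne_zero, hgn]
      have := Polynomial.degree_sub_lt h1' (pow_ne_zero _ Polynomial.X_ne_zero) (by
        rw [Polynomial.monic_X_pow f.natDegree, hg])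
      rwa [Polynomial.degree_X_pow] at this
  have hm0 : delta a r < Fintype.card F ^ f.natDegree := delta_lt_pow a h0 hrd
  have hfac : (X : F[X]) ^ f.natDegree - deltaInv a (delta a r) = g := by
    rw [deltaInv_delta a h0, hrdef]; ring
  have hdvd : f ∣ g := ⟨C f.leadingCoeff⁻¹, rfl⟩
  exact hdvd.trans (hfac ▸ Finset.dvd_prod_of_mem _ (Finset.mem_range.mpr hm0))

private lemma fact_B (h0 : a 0 = 0) {f : F[X]} (hf : Irreducible f) {m : ℕ}
    (hm : m < Fintype.card F ^ f.natDegree) : ¬ f ∣ pfact a (deltaInv a m) := by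
  intro hdvd
  rw [pfact, delta_deltaInv a h0] at hdvd
  have hprime : Prime f := hf.prime
  obtain ⟨k, hk, hdk⟩ := hprime.exists_mem_finset_dvd hdvd
  simp only [Finset.mem_range] at hk
  have hkm : k < Fintype.card F ^ f.natDegree := lt_trans hk hm
  have hne : deltaInv a m - deltaInv a k ≠ 0 := by
    intro h
    have := deltaInv_injective a h0 (sub_eq_zero.mp h)
    omega
  have hdeg : (deltaInv a m - deltaInv a k).degree < (f.natDegree : ℕ) :=
    lt_of_le_of_lt (Polynomial.degree_sub_le _ _)
      (max_lt (degree_deltaInv_lt a h0 hm) (degree_deltaInv_lt a h0 hkm))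
  have hfd : f.degree ≤ (deltaInv a m - deltaInv a k).degree :=
    Polynomial.degree_le_of_dvd hdk hne
  rw [Polynomial.degree_eq_natDegree hf.ne_zero] at hfd
  exact absurd (lt_of_le_of_lt hfd hdeg) (lt_irrefl _)


/-- Proposition 3.1: (1) `S(a f) = S(f)` for nonzero constants `a`;
(2) `S(f) ≤ t^{deg f}` for nonzero `f` (in the order given by `delta`);
(3) `S(f) = t^{deg f}` for irreducible `f`. -/
theorem smarandache_basic (a : Fin (Fintype.card F) ≃ F) (h0 : a 0 = 0) (h1 : a 1 = 1) :
    (∀ f : F[X], ∀ b : F, b ≠ 0 → S a (C b * f) = S a f) ∧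
    (∀ f : F[X], f ≠ 0 → delta a (S a f) ≤ delta a (X ^ f.natDegree)) ∧
    (∀ f : F[X], Irreducible f → S a f = X ^ f.natDegree) := by
  refine ⟨fun f b hb => ?_, fun f hf => ?_, fun f hf => ?_⟩
  · by_cases hf0 : f = 0
    · rw [hf0, mul_zero]
    · have hbf : C b * f ≠ 0 := mul_ne_zero (by simpa using hb) hf0
      rw [S, S, if_neg hbf, if_neg hf0]
      have hset : {m : ℕ | C b * f ∣ pfact a (deltaInv a m)}
          = {m : ℕ | f ∣ pfact a (deltaInv a m)} := by
        ext m
        simp only [Set.mem_setOf_eq]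
        constructor
        · exact fun h => (dvd_mul_left f (C b)).trans h
        · intro h
          refine dvd_trans ⟨C b⁻¹, ?_⟩ h
          rw [mul_comm (C b) f, mul_assoc, ← Polynomial.C_mul, mul_inv_cancel₀ hb,
            Polynomial.C_1, mul_one]
      rw [hset]
  · rw [S, if_neg hf, delta_deltaInv a h0, delta_X_pow a h0 h1]
    exact Nat.sInf_le (fact_A a h0 h1 hf)
  · have hne := hf.ne_zero
    rw [S, if_neg hne, ← deltaInv_card_pow a h0 h1]
    congr 1
    refine le_antisymm (Nat.sInf_le (fact_A a h0 h1 hne)) ?_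
    refine le_csInf ⟨_, fact_A a h0 h1 hne⟩ ?_
    intro m hm
    by_contra hlt
    exact fact_B a h0 hf (by omega) hm
end

section
/- Suppose P₁, P₂, …, P_k ∈ F_q[t] are distinct monic irreducible polynomials and e₁, e₂, …, e_k are positive integers. Then S(P₁^{e₁} P₂^{e₂} ⋯ P_k^{e_k}) = max{ S(P₁^{e₁}), S(P₂^{e₂}), …, S(P_k^{e_k}) }, where the maximum is taken with respect to the order f > g iff δ(f) > δ(g). -/
open Polynomial

variable {F : Type*} [Field F] [Fintype F] [DecidableEq F]

namespace SmHelper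

open Finset

theorem sum_lt_pow (q : ℕ) (K : ℕ) (c : ℕ → ℕ) (hc : ∀ j, c j < q) :
    ∑ j ∈ range K, c j * q ^ j < q ^ K := by
  induction K with
  | zero => simp
  | succ K ih =>
    rw [Finset.sum_range_succ]
    calc ∑ j ∈ range K, c j * q ^ j + c K * q ^ K < q ^ K + c K * q ^ K := by omega
    _ = (c K + 1) * q ^ K := by ring
    _ ≤ q * q ^ K := Nat.mul_le_mul_right _ (hc K)
    _ = q ^ (K+1) := by ring

theorem sum_digits (m q : ℕ) (K : ℕ) :
    ∑ j ∈ range K, (m / q ^ j % q) * q ^ j = m % q ^ K := by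
  induction K with
  | zero => simp [Nat.mod_one]
  | succ K ih =>
    rw [Finset.sum_range_succ, ih, pow_succ, Nat.mod_mul]
    ring

theorem digit_sum (q : ℕ) (hq : 2 ≤ q) (c : ℕ → ℕ) (hc : ∀ j, c j < q) (K i : ℕ) :
    (∑ j ∈ range K, c j * q ^ j) / q ^ i % q = if i < K then c i else 0 := by
  split_ifs with h
  · have hdec : ∑ j ∈ range K, c j * q ^ j
        = (∑ j ∈ range i, c j * q ^ j) + q ^ i * (c i + q * ∑ j ∈ range (K - (i+1)), c (i+1+j) * q ^ j) := by
      rw [← Finset.sum_range_add_sum_Ico _ (le_of_lt h), Finset.sum_Ico_eq_sum_range]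
      have : ∀ j ∈ range (K - i), c (i + j) * q ^ (i + j) = q ^ i * (c (i+j) * q ^ j) := by
        intro j _; rw [pow_add]; ring
      rw [Finset.sum_congr rfl this, ← Finset.mul_sum]
      have hKi : K - i = 1 + (K - (i+1)) := by omega
      rw [hKi, Finset.sum_range_add]
      simp only [Finset.sum_range_one, Finset.mul_sum]
      congr 1
      rw [Nat.mul_add, Nat.mul_add]
      congr 1
      · simp
      · rw [Finset.mul_sum, Finset.mul_sum]
        apply Finset.sum_congr rfl
        intro j _
        rw [pow_add, pow_one]; ring
    rw [hdec, Nat.add_mul_div_left _ _ (Nat.pow_pos (n := i) (by omega)),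
      Nat.div_eq_of_lt (sum_lt_pow q i c hc), Nat.zero_add, Nat.add_mul_mod_self_left,
      Nat.mod_eq_of_lt (hc i)]
  · rw [Nat.div_eq_of_lt, Nat.zero_mod]
    exact lt_of_lt_of_le (sum_lt_pow q K c hc) (Nat.pow_le_pow_right (by omega) (by omega))

variable (a : Fin (Fintype.card F) ≃ F)

local notation "q" => Fintype.card F

theorem hq2 : 2 ≤ Fintype.card F := Fintype.one_lt_card

theorem lt_pow_self' {m j : ℕ} (h : m < j) : m < Fintype.card F ^ j :=
  lt_of_lt_of_le (Nat.lt_of_lt_of_le h (Nat.le_of_lt (Nat.lt_two_pow_self (n := j))))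
    (Nat.pow_le_pow_left (hq2 (F := F)) j)

theorem coeff_deltaInv (h0 : a 0 = 0) (m j : ℕ) :
    (deltaInv a m).coeff j = a ⟨m / Fintype.card F ^ j % Fintype.card F,
      Nat.mod_lt _ Fintype.card_pos⟩ := by
  rw [deltaInv, finset_sum_coeff]
  simp only [coeff_C_mul, coeff_X_pow, mul_ite, mul_one, mul_zero]
  rw [Finset.sum_ite_eq (range (m+1)) j]
  by_cases hj : j ∈ range (m + 1)
  · simp [hj]
  · rw [if_neg hj]
    have hjm : m < j := by simpa using Nat.lt_of_succ_le (Nat.not_lt.mp (by simpa using hj))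
    have hd : m / Fintype.card F ^ j = 0 := Nat.div_eq_of_lt (lt_pow_self' (F := F) hjm)
    have hval : (⟨m / Fintype.card F ^ j % Fintype.card F, Nat.mod_lt _ Fintype.card_pos⟩ :
        Fin (Fintype.card F)) = 0 := by
      apply Fin.ext
      simp [hd]
    rw [hval, h0]

theorem natDegree_deltaInv_le (h0 : a 0 = 0) (m : ℕ) : (deltaInv a m).natDegree ≤ m := by
  rw [natDegree_le_iff_coeff_eq_zero]
  intro N hN
  rw [coeff_deltaInv a h0]
  have : m / Fintype.card F ^ N = 0 := Nat.div_eq_of_lt (lt_pow_self' (F := F) hN)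
  rw [this]
  simpa using h0

theorem degree_deltaInv_lt (h0 : a 0 = 0) {m D : ℕ} (h : m < Fintype.card F ^ D) :
    (deltaInv a m).degree < (D : ℕ) := by
  rw [degree_lt_iff_coeff_zero]
  intro N hN
  rw [coeff_deltaInv a h0]
  have hDN : D ≤ N := by exact_mod_cast hN
  have : m / Fintype.card F ^ N = 0 :=
    Nat.div_eq_of_lt (lt_of_lt_of_le h (Nat.pow_le_pow_right (by have := hq2 (F := F); omega) hDN))
  rw [this]
  simpa using h0

theorem delta_deltaInv (h0 : a 0 = 0) (m : ℕ) : delta a (deltaInv a m) = m := by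
  have hco := coeff_deltaInv a h0 m
  rw [delta]
  have hsub : range ((deltaInv a m).natDegree + 1) ⊆ range (m + 1) := by
    apply Finset.range_subset_range.mpr
    have := natDegree_deltaInv_le a h0 m
    omega
  rw [Finset.sum_subset hsub]
  · have : ∀ j ∈ range (m+1),
        ((a.symm ((deltaInv a m).coeff j) : ℕ)) * Fintype.card F ^ j
          = (m / Fintype.card F ^ j % Fintype.card F) * Fintype.card F ^ j := by
      intro j _
      rw [hco j, Equiv.symm_apply_apply]
    rw [Finset.sum_congr rfl this, sum_digits]
    exact Nat.mod_eq_of_lt (lt_pow_self' (F := F) (Nat.lt_succ_self m))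
  · intro j _ hj
    simp only [Finset.mem_range, not_lt] at hj
    have hc0 : (deltaInv a m).coeff j = 0 :=
      coeff_eq_zero_of_natDegree_lt (by omega)
    have hs0 : a.symm (0 : F) = 0 := by rw [← h0, Equiv.symm_apply_apply]
    rw [hc0, hs0]
    simp

theorem symm_zero (h0 : a 0 = 0) : a.symm (0 : F) = 0 := by rw [← h0, Equiv.symm_apply_apply]

theorem digit_lt (h0 : a 0 = 0) (f : F[X]) (j : ℕ) :
    (a.symm (f.coeff j) : ℕ) < Fintype.card F := (a.symm (f.coeff j)).isLt

theorem deltaInv_delta (h0 : a 0 = 0) (f : F[X]) : deltaInv a (delta a f) = f := by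
  ext j
  rw [coeff_deltaInv a h0]
  have hds := digit_sum (Fintype.card F) (hq2 (F := F))
    (fun i => (a.symm (f.coeff i) : ℕ)) (fun i => (a.symm (f.coeff i)).isLt)
    (f.natDegree + 1) j
  rw [delta] at *
  by_cases hj : j < f.natDegree + 1
  · rw [if_pos hj] at hds
    have hval : (⟨(∑ i ∈ range (f.natDegree + 1), (a.symm (f.coeff i) : ℕ) * Fintype.card F ^ i)
          / Fintype.card F ^ j % Fintype.card F, Nat.mod_lt _ Fintype.card_pos⟩ :
        Fin (Fintype.card F)) = a.symm (f.coeff j) := by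
      apply Fin.ext; exact hds
    rw [hval, Equiv.apply_symm_apply]
  · rw [if_neg hj] at hds
    have hval : (⟨(∑ i ∈ range (f.natDegree + 1), (a.symm (f.coeff i) : ℕ) * Fintype.card F ^ i)
          / Fintype.card F ^ j % Fintype.card F, Nat.mod_lt _ Fintype.card_pos⟩ :
        Fin (Fintype.card F)) = 0 := by
      apply Fin.ext; exact hds
    rw [hval, h0, coeff_eq_zero_of_natDegree_lt (by omega)]

theorem delta_zero (h0 : a 0 = 0) : delta a (0 : F[X]) = 0 := by
  simp [delta, symm_zero a h0]

theorem deltaInv_zero (h0 : a 0 = 0) : deltaInv a 0 = 0 := by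
  have := deltaInv_delta a h0 (0 : F[X])
  rwa [delta_zero a h0] at this

theorem deltaInv_injective (h0 : a 0 = 0) : Function.Injective (deltaInv a) := by
  intro m n h
  have := congrArg (delta a) h
  rwa [delta_deltaInv a h0, delta_deltaInv a h0] at this

theorem delta_eq_zero_iff (h0 : a 0 = 0) (f : F[X]) : delta a f = 0 ↔ f = 0 := by
  constructor
  · intro h
    have := deltaInv_delta a h0 f
    rw [h, deltaInv_zero a h0] at this
    exact this.symm
  · rintro rfl; exact delta_zero a h0

theorem deltaInv_block (h0 : a 0 = 0) {u : ℕ} (v D : ℕ) (hu : u < Fintype.card F ^ D) :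
    deltaInv a (u + Fintype.card F ^ D * v) = deltaInv a u + X ^ D * deltaInv a v := by
  ext j
  rw [coeff_deltaInv a h0, coeff_add, coeff_deltaInv a h0, mul_comm (X ^ D : F[X]),
    coeff_mul_X_pow']
  by_cases hj : j < D
  · rw [if_neg (by omega), add_zero]
    congr 1
    apply Fin.ext
    show (u + Fintype.card F ^ D * v) / Fintype.card F ^ j % Fintype.card F
        = u / Fintype.card F ^ j % Fintype.card F
    have hDj : Fintype.card F ^ D = Fintype.card F ^ j * (Fintype.card F * Fintype.card F ^ (D - (j+1))) := by
      rw [← pow_succ', ← pow_add]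
      congr 1
      omega
    rw [hDj, mul_assoc, Nat.add_mul_div_left _ _ (Nat.pow_pos (n := j) (by have := hq2 (F := F); omega))]
    rw [mul_assoc (Fintype.card F), Nat.add_mul_mod_self_left]
  · rw [if_pos (by omega)]
    have h1 : (u + Fintype.card F ^ D * v) / Fintype.card F ^ j = v / Fintype.card F ^ (j - D) := by
      have hsplit : Fintype.card F ^ j = Fintype.card F ^ D * Fintype.card F ^ (j - D) := by
        rw [← pow_add]; congr 1; omega
      rw [hsplit, ← Nat.div_div_eq_div_mul, Nat.add_mul_div_left _ _
        (Nat.pow_pos (n := D) (by have := hq2 (F := F); omega)),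
        Nat.div_eq_of_lt hu, Nat.zero_add]
    have h2 : u / Fintype.card F ^ j = 0 := by
      apply Nat.div_eq_of_lt
      exact lt_of_lt_of_le hu (Nat.pow_le_pow_right (by have := hq2 (F := F); omega) (by omega))
    rw [coeff_deltaInv a h0]
    have hval0 : (⟨u / Fintype.card F ^ j % Fintype.card F, Nat.mod_lt _ Fintype.card_pos⟩ :
        Fin (Fintype.card F)) = 0 := by apply Fin.ext; simp [h2]
    rw [hval0, h0, zero_add]
    congr 1
    apply Fin.ext
    show (u + Fintype.card F ^ D * v) / Fintype.card F ^ j % Fintype.card F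
        = v / Fintype.card F ^ (j - D) % Fintype.card F
    rw [h1]

theorem dvd_sub_modByMonic {M : F[X]} (hM : M.Monic) (g : F[X]) : M ∣ g - g %ₘ M := by
  rw [modByMonic_eq_sub_mul_div g M]
  simp only [sub_sub_cancel]
  exact Dvd.intro _ rfl

theorem eq_modByMonic_of_dvd_sub {M g h : F[X]} (hM : M.Monic)
    (hdeg : h.degree < M.degree) (hdvd : M ∣ g - h) : h = g %ₘ M := by
  have h2 : M ∣ g %ₘ M - h := by
    have := dvd_sub hdvd (dvd_sub_modByMonic hM g)
    simpa using this
  have hlt : (g %ₘ M - h).degree < M.degree :=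
    lt_of_le_of_lt (degree_sub_le _ _) (max_lt (degree_modByMonic_lt g hM) hdeg)
  have := eq_zero_of_dvd_of_degree_lt h2 hlt
  have := sub_eq_zero.mp this
  exact this.symm

theorem delta_lt_pow (h0 : a 0 = 0) {f : F[X]} {D : ℕ} (hdeg : f.degree < (D : ℕ)) :
    delta a f < Fintype.card F ^ D := by
  by_cases hf : f = 0
  · subst hf
    rw [delta_zero a h0]
    exact Nat.pow_pos (n := D) (by have := hq2 (F := F); omega)
  · have h1 : delta a f < Fintype.card F ^ (f.natDegree + 1) :=
      sum_lt_pow _ _ _ (fun j => (a.symm (f.coeff j)).isLt)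
    refine lt_of_lt_of_le h1 (Nat.pow_le_pow_right (by have := hq2 (F := F); omega) ?_)
    have := (degree_eq_natDegree hf) ▸ hdeg
    exact_mod_cast Nat.succ_le_of_lt (by exact_mod_cast this)

open scoped Classical in
theorem count_congruent (h0 : a 0 = 0) {M : F[X]} (hM : M.Monic) (hD : 0 < M.natDegree)
    (n : ℕ) :
    ((range n).filter (fun r => M ∣ deltaInv a n - deltaInv a r)).card
      = n / Fintype.card F ^ M.natDegree := by
  classical
  set D := M.natDegree with hDdef
  set Q := Fintype.card F ^ D with hQdef
  have hQpos : 0 < Q := Nat.pow_pos (n := D) (by have := hq2 (F := F); omega)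
  have hMdeg : M.degree = (D : ℕ) := degree_eq_natDegree hM.ne_zero
  set g : ℕ → F[X] := fun v => (deltaInv a n - X ^ D * deltaInv a v) %ₘ M with hgdef
  have hgdeg : ∀ v, (g v).degree < (D : ℕ) := fun v => hMdeg ▸ degree_modByMonic_lt _ hM
  set u : ℕ → ℕ := fun v => delta a (g v) with hudef
  have hu : ∀ v, u v < Q := fun v => delta_lt_pow a h0 (hgdeg v)
  have hginv : ∀ v, deltaInv a (u v) = g v := fun v => deltaInv_delta a h0 (g v)
  rw [← Finset.card_range (n / Q)]
  symm
  apply Finset.card_nbij' (fun v => u v + Q * v) (fun r => r / Q)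
  · intro v hv
    simp only [Finset.mem_coe, Finset.mem_range] at hv
    have h1 : (v + 1) * Q ≤ n := by
      calc (v + 1) * Q ≤ (n / Q) * Q := Nat.mul_le_mul_right _ (by omega)
      _ ≤ n := Nat.div_mul_le_self n Q
    have hlt : u v + Q * v < n := by have := hu v; nlinarith [hu v]
    simp only [Finset.mem_coe, Finset.mem_filter, Finset.mem_range]
    refine ⟨hlt, ?_⟩
    rw [deltaInv_block a h0 v D (hu v), hginv]
    have : deltaInv a n - (g v + X ^ D * deltaInv a v)
        = (deltaInv a n - X ^ D * deltaInv a v) - g v := by ring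
    rw [this]
    exact dvd_sub_modByMonic hM _
  · intro r hr
    simp only [Finset.mem_coe, Finset.mem_filter, Finset.mem_range] at hr
    obtain ⟨hrn, hdvd⟩ := hr
    simp only [Finset.mem_coe, Finset.mem_range]
    have hle : r / Q ≤ n / Q := Nat.div_le_div_right (le_of_lt hrn)
    rcases lt_or_eq_of_le hle with h | h
    · exact h
    · exfalso
      have hrmod : r % Q < n % Q := by
        have h1 := Nat.mod_add_div r Q
        have h2 := Nat.mod_add_div n Q
        have := Nat.mod_lt r hQpos
        have := Nat.mod_lt n hQpos
        have h3 : Q * (r / Q) = Q * (n / Q) := by rw [h]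
        omega
      have hrblock : deltaInv a r = deltaInv a (r % Q) + X ^ D * deltaInv a (r / Q) := by
        conv_lhs => rw [← Nat.mod_add_div r Q]
        exact deltaInv_block a h0 _ D (Nat.mod_lt r hQpos)
      have hnblock : deltaInv a n = deltaInv a (n % Q) + X ^ D * deltaInv a (n / Q) := by
        conv_lhs => rw [← Nat.mod_add_div n Q]
        exact deltaInv_block a h0 _ D (Nat.mod_lt n hQpos)
      rw [hrblock, hnblock, h] at hdvd
      have hdvd' : M ∣ deltaInv a (n % Q) - deltaInv a (r % Q) := by
        have heq : deltaInv a (n % Q) + X ^ D * deltaInv a (n / Q)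
            - (deltaInv a (r % Q) + X ^ D * deltaInv a (n / Q))
            = deltaInv a (n % Q) - deltaInv a (r % Q) := by ring
        rwa [heq] at hdvd
      have hne : deltaInv a (n % Q) - deltaInv a (r % Q) ≠ 0 := by
        intro hcon
        have := sub_eq_zero.mp hcon
        have := deltaInv_injective a h0 this
        omega
      have hdlt : (deltaInv a (n % Q) - deltaInv a (r % Q)).degree < (D : ℕ) :=
        lt_of_le_of_lt (degree_sub_le _ _)
          (max_lt (degree_deltaInv_lt a h0 (Nat.mod_lt n hQpos))
            (degree_deltaInv_lt a h0 (Nat.mod_lt r hQpos)))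
      exact hne (eq_zero_of_dvd_of_degree_lt hdvd' (hMdeg ▸ hdlt))
  · intro v hv
    dsimp only
    rw [Nat.add_mul_div_left _ _ hQpos, Nat.div_eq_of_lt (hu v), Nat.zero_add]
  · intro r hr
    simp only [Finset.mem_coe, Finset.mem_filter, Finset.mem_range] at hr
    obtain ⟨hrn, hdvd⟩ := hr
    have hrblock : deltaInv a r = deltaInv a (r % Q) + X ^ D * deltaInv a (r / Q) := by
      conv_lhs => rw [← Nat.mod_add_div r Q]
      exact deltaInv_block a h0 _ D (Nat.mod_lt r hQpos)
    have hkey : deltaInv a (r % Q) = g (r / Q) := by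
      apply eq_modByMonic_of_dvd_sub hM
        (hMdeg ▸ degree_deltaInv_lt a h0 (Nat.mod_lt r hQpos))
      have heq : deltaInv a n - X ^ D * deltaInv a (r / Q) - deltaInv a (r % Q)
          = deltaInv a n - deltaInv a r := by rw [hrblock]; ring
      rwa [heq]
    have : u (r / Q) = r % Q := by
      rw [hudef]
      simp only
      rw [← hkey, delta_deltaInv a h0]
    dsimp only
    rw [this, Nat.mod_add_div r Q]

open UniqueFactorizationMonoid in
theorem pow_dvd_iff_le_count {π g : F[X]} (hp : Irreducible π) (hn : normalize π = π)
    (hg : g ≠ 0) (j : ℕ) :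
    π ^ j ∣ g ↔ j ≤ (normalizedFactors g).count π := by
  rw [pow_dvd_iff_le_emultiplicity, emultiplicity_eq_count_normalizedFactors hp hg, hn]
  exact_mod_cast Nat.cast_le

open UniqueFactorizationMonoid in
theorem count_le_natDegree {π g : F[X]} (hp : Irreducible π) (hn : normalize π = π)
    (hg : g ≠ 0) : (normalizedFactors g).count π ≤ g.natDegree := by
  have hdvd : π ^ ((normalizedFactors g).count π) ∣ g :=
    (pow_dvd_iff_le_count hp hn hg _).mpr le_rfl
  have h1 : (π ^ ((normalizedFactors g).count π)).natDegree ≤ g.natDegree :=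
    natDegree_le_of_dvd hdvd hg
  rw [natDegree_pow] at h1
  have := hp.natDegree_pos
  nlinarith

open UniqueFactorizationMonoid in
open scoped Classical in
theorem count_nf_eq_card_filter {π g : F[X]} (hp : Irreducible π) (hn : normalize π = π)
    (hg : g ≠ 0) {J : ℕ} (hJ : g.natDegree ≤ J) :
    (normalizedFactors g).count π
      = ((Finset.Icc 1 J).filter (fun j => π ^ j ∣ g)).card := by
  classical
  have hcJ : (normalizedFactors g).count π ≤ J := (count_le_natDegree hp hn hg).trans hJ
  have : (Finset.Icc 1 J).filter (fun j => π ^ j ∣ g)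
      = Finset.Icc 1 ((normalizedFactors g).count π) := by
    ext j
    simp only [Finset.mem_filter, Finset.mem_Icc]
    constructor
    · rintro ⟨⟨h1, _⟩, hd⟩
      exact ⟨h1, (pow_dvd_iff_le_count hp hn hg j).mp hd⟩
    · rintro ⟨h1, h2⟩
      exact ⟨⟨h1, h2.trans hcJ⟩, (pow_dvd_iff_le_count hp hn hg j).mpr h2⟩
  rw [this, Nat.card_Icc]
  omega

open UniqueFactorizationMonoid in
theorem count_nf_prod {ι : Type*} (s : Finset ι) (f : ι → F[X]) (hf : ∀ i ∈ s, f i ≠ 0)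
    (π : F[X]) :
    (normalizedFactors (∏ i ∈ s, f i)).count π
      = ∑ i ∈ s, (normalizedFactors (f i)).count π := by
  classical
  induction s using Finset.induction with
  | empty => simp [normalizedFactors_one]
  | insert i s hns ih =>
    rw [Finset.prod_insert hns, normalizedFactors_mul (hf i (Finset.mem_insert_self i s))
      (Finset.prod_ne_zero_iff.mpr (fun j hj => hf j (Finset.mem_insert_of_mem hj))),
      Multiset.count_add, Finset.sum_insert hns, ih (fun j hj => hf j (Finset.mem_insert_of_mem hj))]

theorem deltaInv_sub_ne_zero (h0 : a 0 = 0) {r n : ℕ} (h : r < n) :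
    deltaInv a n - deltaInv a r ≠ 0 := by
  intro hcon
  have := deltaInv_injective a h0 (sub_eq_zero.mp hcon)
  omega

theorem pfact_deltaInv (n : ℕ) (h0 : a 0 = 0) :
    pfact a (deltaInv a n) = ∏ r ∈ range n, (deltaInv a n - deltaInv a r) := by
  rw [pfact, delta_deltaInv a h0]

theorem pfact_deltaInv_ne_zero (h0 : a 0 = 0) (n : ℕ) : pfact a (deltaInv a n) ≠ 0 := by
  rw [pfact_deltaInv a n h0]
  exact Finset.prod_ne_zero_iff.mpr (fun r hr =>
    deltaInv_sub_ne_zero a h0 (Finset.mem_range.mp hr))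

theorem natDegree_deltaInv_sub_le (h0 : a 0 = 0) (n r : ℕ) (h : r < n) :
    (deltaInv a n - deltaInv a r).natDegree ≤ n := by
  refine le_trans (natDegree_sub_le _ _) ?_
  have h1 := natDegree_deltaInv_le a h0 n
  have h2 := natDegree_deltaInv_le a h0 r
  omega

open UniqueFactorizationMonoid in
open scoped Classical in
theorem count_pfact (h0 : a 0 = 0) {π : F[X]} (hp : Irreducible π) (hn : normalize π = π)
    {n J : ℕ} (hJ : n ≤ J) :
    (normalizedFactors (pfact a (deltaInv a n))).count π
      = ∑ j ∈ Finset.Icc 1 J, n / Fintype.card F ^ (j * π.natDegree) := by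
  classical
  rw [pfact_deltaInv a n h0,
    count_nf_prod _ _ (fun r hr => deltaInv_sub_ne_zero a h0 (Finset.mem_range.mp hr)) π]
  have hstep : ∀ r ∈ range n,
      (normalizedFactors (deltaInv a n - deltaInv a r)).count π
        = ((Finset.Icc 1 J).filter (fun j => π ^ j ∣ deltaInv a n - deltaInv a r)).card := by
    intro r hr
    exact count_nf_eq_card_filter hp hn (deltaInv_sub_ne_zero a h0 (Finset.mem_range.mp hr))
      ((natDegree_deltaInv_sub_le a h0 n r (Finset.mem_range.mp hr)).trans hJ)
  rw [Finset.sum_congr rfl hstep]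
  have hswap : ∑ r ∈ range n,
      ((Finset.Icc 1 J).filter (fun j => π ^ j ∣ deltaInv a n - deltaInv a r)).card
      = ∑ j ∈ Finset.Icc 1 J,
        ((range n).filter (fun r => π ^ j ∣ deltaInv a n - deltaInv a r)).card := by
    simp only [Finset.card_filter]
    exact Finset.sum_comm
  rw [hswap]
  apply Finset.sum_congr rfl
  intro j hj
  simp only [Finset.mem_Icc] at hj
  have hmon : (π ^ j).Monic := by
    have : Monic (normalize π) := monic_normalize hp.ne_zero
    rw [hn] at this
    exact this.pow j
  have hDpos : 0 < (π ^ j).natDegree := by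
    rw [natDegree_pow]
    have := hp.natDegree_pos
    have := hj.1
    positivity
  have := count_congruent a h0 hmon hDpos n
  rw [this, natDegree_pow]

open UniqueFactorizationMonoid in
theorem pfact_dvd_pfact (h0 : a 0 = 0) {m n : ℕ} (h : m ≤ n) :
    pfact a (deltaInv a m) ∣ pfact a (deltaInv a n) := by
  classical
  rw [dvd_iff_normalizedFactors_le_normalizedFactors (pfact_deltaInv_ne_zero a h0 m)
    (pfact_deltaInv_ne_zero a h0 n), Multiset.le_iff_count]
  intro π
  by_cases hmem : π ∈ normalizedFactors (pfact a (deltaInv a m))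
  · have hp : Irreducible π := irreducible_of_normalized_factor π hmem
    have hn : normalize π = π := normalize_normalized_factor π hmem
    rw [count_pfact a h0 hp hn (le_refl n |>.trans' h), count_pfact a h0 hp hn (le_refl n)]
    exact Finset.sum_le_sum (fun j _ => Nat.div_le_div_right h)
  · rw [Multiset.count_eq_zero_of_notMem hmem]
    exact Nat.zero_le _

theorem dvd_pfact_self (h0 : a 0 = 0) {f : F[X]} (hf : f ≠ 0) : f ∣ pfact a f := by
  have hpos : 0 < delta a f := by
    rcases Nat.eq_zero_or_pos (delta a f) with h | h
    · exact absurd ((delta_eq_zero_iff a h0 f).mp h) hf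
    · exact h
  have hmem : 0 ∈ range (delta a f) := Finset.mem_range.mpr hpos
  have := Finset.dvd_prod_of_mem (fun m => f - deltaInv a m) hmem
  simp only [deltaInv_zero a h0, sub_zero] at this
  exact this

end SmHelper

/-- Proposition 3.2: for distinct monic irreducible `P₁, …, P_k` and positive integers
`e₁, …, e_k`, `S(P₁^{e₁} ⋯ P_k^{e_k}) = max {S(P₁^{e₁}), …, S(P_k^{e_k})}`, the maximum
being taken with respect to the order given by `delta`. -/
theorem smarandache_prod (a : Fin (Fintype.card F) ≃ F) (h0 : a 0 = 0) (h1 : a 1 = 1)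
    (k : ℕ) (hk : 0 < k) (P : Fin k → F[X]) (hmon : ∀ i, (P i).Monic)
    (hirr : ∀ i, Irreducible (P i)) (hinj : Function.Injective P)
    (e : Fin k → ℕ) (he : ∀ i, 0 < e i) :
    ∃ i : Fin k, S a (∏ j, P j ^ e j) = S a (P i ^ e i) ∧
      ∀ j : Fin k, delta a (S a (P j ^ e j)) ≤ delta a (S a (P i ^ e i)) := by
  classical
  have hPne : ∀ i, P i ^ e i ≠ 0 := fun i => pow_ne_zero _ (hirr i).ne_zero
  have hfne : (∏ j, P j ^ e j) ≠ 0 :=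
    Finset.prod_ne_zero_iff.mpr (fun i _ => hPne i)
  set A : Fin k → Set ℕ := fun i => {m | P i ^ e i ∣ pfact a (deltaInv a m)} with hAdef
  have hAne : ∀ i, (A i).Nonempty := by
    intro i
    refine ⟨delta a (P i ^ e i), ?_⟩
    show P i ^ e i ∣ pfact a (deltaInv a (delta a (P i ^ e i)))
    rw [SmHelper.deltaInv_delta a h0]
    exact SmHelper.dvd_pfact_self a h0 (hPne i)
  set N : Fin k → ℕ := fun i => sInf (A i) with hNdef
  have hNmem : ∀ i, P i ^ e i ∣ pfact a (deltaInv a (N i)) := fun i => Nat.sInf_mem (hAne i)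
  obtain ⟨i, -, hi⟩ := Finset.exists_max_image Finset.univ N ⟨⟨0, hk⟩, Finset.mem_univ _⟩
  have hcop : (↑(Finset.univ : Finset (Fin k)) : Set (Fin k)).Pairwise
      (Function.onFun IsCoprime fun j => P j ^ e j) := by
    intro x _ y _ hxy
    have hnd : ¬ P x ∣ P y := by
      intro hdvd
      exact hxy (hinj (Polynomial.eq_of_monic_of_associated (hmon x) (hmon y)
        ((hirr x).associated_of_dvd (hirr y) hdvd)))
    exact (((hirr x).coprime_iff_not_dvd.mpr hnd).pow : IsCoprime (P x ^ e x) (P y ^ e y))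
  have hdvd_iff : ∀ m, (∏ j, P j ^ e j) ∣ pfact a (deltaInv a m)
      ↔ ∀ j, P j ^ e j ∣ pfact a (deltaInv a m) := by
    intro m
    constructor
    · intro h j
      exact dvd_trans (Finset.dvd_prod_of_mem (fun j => P j ^ e j) (Finset.mem_univ j)) h
    · intro h
      exact Finset.prod_dvd_of_coprime hcop (fun j _ => h j)
  have hNif : (∏ j, P j ^ e j) ∣ pfact a (deltaInv a (N i)) := by
    rw [hdvd_iff]
    intro j
    exact dvd_trans (hNmem j) (SmHelper.pfact_dvd_pfact a h0 (hi j (Finset.mem_univ j)))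
  have hSinf : sInf {m | (∏ j, P j ^ e j) ∣ pfact a (deltaInv a m)} = N i := by
    apply le_antisymm
    · exact Nat.sInf_le hNif
    · have hmem' : sInf {m | (∏ j, P j ^ e j) ∣ pfact a (deltaInv a m)}
          ∈ {m | (∏ j, P j ^ e j) ∣ pfact a (deltaInv a m)} := Nat.sInf_mem ⟨N i, hNif⟩
      have : P i ^ e i ∣ pfact a (deltaInv a
          (sInf {m | (∏ j, P j ^ e j) ∣ pfact a (deltaInv a m)})) := (hdvd_iff _).mp hmem' i
      exact Nat.sInf_le this
  refine ⟨i, ?_, ?_⟩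
  · rw [S, if_neg hfne, S, if_neg (hPne i), hSinf]
  · intro j
    rw [S, if_neg (hPne j), S, if_neg (hPne i), SmHelper.delta_deltaInv a h0,
      SmHelper.delta_deltaInv a h0]
    exact hi j (Finset.mem_univ j)
end
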